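/- arXiv:math/0607390 — 4 statements merged into one kernel-verified Lean document; each statement's English description precedes it below -/
import Mathlib

section
/- Let {s_1,...,s_{m-1}} ⊂ Z^d be a primitive set, let A be the (m-1)×d matrix with rows s_1,...,s_{m-1}, and let U be a unimodular d×d integer matrix such that AU is in Hermite normal form. Then for any s_m ∈ Z^d, the set {s_1,...,s_m} is primitive if and only if gcd(s_m·U^{(i)} : m ≤ i ≤ d) = 1, where U^{(i)} denotes the i-th column of U. -/
/-- A family `s` of vectors in `ℤ^d` is *primitive* if it is a `ℤ`-basis of the
lattice `ℤ^d ∩ span_ℝ(s)`. -/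
def IsPrimitive {d m : ℕ} (s : Fin m → Fin d → ℤ) : Prop :=
  LinearIndependent ℤ s ∧
  ∀ x : Fin d → ℤ,
    (fun i => (x i : ℝ)) ∈
      Submodule.span ℝ (Set.range fun k => fun i => (s k i : ℝ)) →
    x ∈ Submodule.span ℤ (Set.range s)

/-- `B ∈ ℤ^{p×q}` is in Hermite normal form: zero above the diagonal, positive
diagonal, and entries left of the diagonal nonnegative and smaller than the
diagonal entry of their row. -/
def IsHermiteNormalForm {p q : ℕ} (B : Matrix (Fin p) (Fin q) ℤ) : Prop :=
  (∀ (i : Fin p) (j : Fin q), (i : ℕ) < (j : ℕ) → B i j = 0) ∧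
  (∀ (i : Fin p) (h : (i : ℕ) < q), 0 < B i ⟨i, h⟩) ∧
  (∀ (i : Fin p) (h : (i : ℕ) < q) (j : Fin q), (j : ℕ) < (i : ℕ) →
    0 ≤ B i j ∧ B i j < B i ⟨i, h⟩)

open Matrix Set


/-- Bezout for Finset.gcd over ℤ. -/
lemma gcd_eq_sum' {ι : Type*} [DecidableEq ι] (S : Finset ι) (f : ι → ℤ) :
    ∃ u : ι → ℤ, ∑ i ∈ S, u i * f i = S.gcd f := by
  classical
  induction S using Finset.induction_on with
  | empty => exact ⟨0, by simp⟩
  | insert a S ha ih =>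
    obtain ⟨u, hu⟩ := ih
    refine ⟨Function.update (fun i => Int.gcdB (f a) (S.gcd f) * u i) a
      (Int.gcdA (f a) (S.gcd f)), ?_⟩
    rw [Finset.sum_insert ha, Finset.gcd_insert]
    have h1 : ∀ i ∈ S, Function.update (fun i => Int.gcdB (f a) (S.gcd f) * u i) a
        (Int.gcdA (f a) (S.gcd f)) i * f i = Int.gcdB (f a) (S.gcd f) * (u i * f i) := by
      intro i hi
      rw [Function.update_of_ne (by rintro rfl; exact ha hi)]
      ring
    rw [Finset.sum_congr rfl h1, Function.update_self, ← Finset.mul_sum, hu,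
      ← Int.coe_gcd, Int.gcd_eq_gcd_ab]
    ring

lemma castVec_vecMul {d : ℕ} (x : Fin d → ℤ) (M : Matrix (Fin d) (Fin d) ℤ) :
    (fun i => ((x ᵥ* M) i : ℝ)) = (fun i => (x i : ℝ)) ᵥ* M.map ((↑·) : ℤ → ℝ) := by
  funext i
  simp [Matrix.vecMul, dotProduct, Matrix.map_apply]

lemma IsPrimitive.vecMul {d n : ℕ} {s : Fin n → Fin d → ℤ} {U : Matrix (Fin d) (Fin d) ℤ}
    (hU : IsUnit U.det) (hs : IsPrimitive s) : IsPrimitive (fun k => s k ᵥ* U) := by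
  obtain ⟨hli, hsp⟩ := hs
  set V := U⁻¹ with hV
  have hUV : U * V = 1 := Matrix.mul_nonsing_inv U hU
  have hVU : V * U = 1 := Matrix.nonsing_inv_mul U hU
  set Ur := U.map ((↑·) : ℤ → ℝ) with hUr
  set Vr := V.map ((↑·) : ℤ → ℝ) with hVr
  have hUrVr : Ur * Vr = 1 := by
    have h1 : (U * V).map (Int.castRingHom ℝ) = U.map (Int.castRingHom ℝ) * V.map (Int.castRingHom ℝ) :=
      Matrix.map_mul
    rw [hUV] at h1
    have h2 : (1 : Matrix (Fin d) (Fin d) ℤ).map (Int.castRingHom ℝ) = 1 :=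
      Matrix.map_one _ (map_zero _) (map_one _)
    rw [h2] at h1
    exact h1.symm
  constructor
  · have hinj : Function.Injective (Matrix.vecMulLinear U : (Fin d → ℤ) →ₗ[ℤ] (Fin d → ℤ)) := by
      intro x y h
      simp only [Matrix.vecMulLinear_apply] at h
      have h2 : (x ᵥ* U) ᵥ* V = (y ᵥ* U) ᵥ* V := by rw [h]
      simpa [Matrix.vecMul_vecMul, hUV, Matrix.vecMul_one] using h2
    have h := hli.map' _ (LinearMap.ker_eq_bot.mpr hinj)
    have heq : (Matrix.vecMulLinear U : (Fin d → ℤ) →ₗ[ℤ] (Fin d → ℤ)) ∘ s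
        = fun k => s k ᵥ* U := by
      funext k; simp
    rwa [heq] at h
  · intro x hx
    have hx' : (fun i => ((x ᵥ* V) i : ℝ)) ∈
        Submodule.span ℝ (Set.range fun k => fun i => ((s k) i : ℝ)) := by
      rw [castVec_vecMul]
      have hmap := Submodule.mem_map_of_mem (f := Matrix.vecMulLinear Vr) hx
      rw [Submodule.map_span] at hmap
      have himg : (Matrix.vecMulLinear Vr) '' (Set.range fun k => fun i => ((s k ᵥ* U) i : ℝ))
          = Set.range fun k => fun i => ((s k) i : ℝ) := by
        rw [← Set.range_comp]
        have hfun : (⇑(Matrix.vecMulLinear Vr) ∘ fun k => fun i => ((s k ᵥ* U) i : ℝ))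
            = fun k => fun i => ((s k) i : ℝ) := by
          funext k
          simp only [Function.comp_apply, Matrix.vecMulLinear_apply, castVec_vecMul,
            Matrix.vecMul_vecMul, hUrVr, Matrix.vecMul_one]
          change (fun i => ((s k i : ℤ) : ℝ)) ᵥ* (Ur * Vr) = _
          rw [hUrVr, Matrix.vecMul_one]
        rw [hfun]
      rw [himg] at hmap
      simpa using hmap
    have hy := hsp _ hx'
    have hmem := Submodule.mem_map_of_mem (f := Matrix.vecMulLinear U) hy
    rw [Submodule.map_span, ← Set.range_comp] at hmem
    have hxeq : (Matrix.vecMulLinear U) (x ᵥ* V) = x := by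
      simp [Matrix.vecMul_vecMul, hVU, Matrix.vecMul_one]
    rw [hxeq] at hmem
    have hcomp : (⇑(Matrix.vecMulLinear U) ∘ s) = fun k => s k ᵥ* U := by funext k; simp
    rwa [hcomp] at hmem

lemma mem_realSpan_of_support {d e : ℕ} (B : Fin e → Fin d → ℤ) (hed : e ≤ d)
    (htri : ∀ (k : Fin e) (i : Fin d), (k : ℕ) < (i : ℕ) → B k i = 0)
    (hdiag : ∀ (k : Fin e) (h : (k : ℕ) < d), B k ⟨k, h⟩ ≠ 0)
    (x : Fin d → ℝ) (hx : ∀ i : Fin d, e ≤ (i : ℕ) → x i = 0) :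
    x ∈ Submodule.span ℝ (Set.range fun k => fun i => (B k i : ℝ)) := by
  suffices h : ∀ n, n ≤ e → ∀ x : Fin d → ℝ, (∀ i : Fin d, n ≤ (i : ℕ) → x i = 0) →
      x ∈ Submodule.span ℝ (Set.range fun k => fun i => (B k i : ℝ)) from h e le_rfl x hx
  intro n
  induction n with
  | zero =>
    intro _ x hx
    have hx0 : x = 0 := funext fun i => hx i (Nat.zero_le _)
    rw [hx0]; exact Submodule.zero_mem _
  | succ n ih =>
    intro hne x hx
    have hne' : n < e := hne
    have hnd : n < d := lt_of_lt_of_le hne' hed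
    set k : Fin e := ⟨n, hne'⟩ with hk
    set i0 : Fin d := ⟨n, hnd⟩ with hi0
    set r : Fin d → ℝ := fun i => (B k i : ℝ) with hr
    have hr0 : r i0 ≠ 0 := by
      have := hdiag k hnd
      simpa [hr, hi0] using this
    set a : ℝ := x i0 / r i0 with ha
    have hy : ∀ i : Fin d, n ≤ (i : ℕ) → (x - a • r) i = 0 := by
      intro i hi
      rcases eq_or_lt_of_le hi with heq | hlt
      · have hii : i = i0 := Fin.ext heq.symm
        rw [hii]
        simp only [Pi.sub_apply, Pi.smul_apply, smul_eq_mul, ha]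
        field_simp
        ring
      · have hx0 : x i = 0 := hx i hlt
        have hB : B k i = 0 := htri k i hlt
        simp [hx0, hB, hr]
    have hmem := ih (le_of_lt hne') _ hy
    have hxeq : x = (x - a • r) + a • r := by abel
    rw [hxeq]
    exact Submodule.add_mem _ hmem
      (Submodule.smul_mem _ _ (Submodule.subset_span ⟨k, rfl⟩))

lemma step2 {d m : ℕ} (hm : 1 ≤ m) (hmd : m ≤ d) (B : Fin (m - 1) → Fin d → ℤ)
    (hB : IsPrimitive B)
    (htri : ∀ (k : Fin (m - 1)) (i : Fin d), (k : ℕ) < (i : ℕ) → B k i = 0)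
    (hdiag : ∀ (k : Fin (m - 1)) (h : (k : ℕ) < d), 0 < B k ⟨k, h⟩)
    (c : Fin d → ℤ) :
    IsPrimitive (Fin.snoc (α := fun _ => Fin d → ℤ) B c) ↔
      (Finset.univ.filter fun i : Fin d => m - 1 ≤ (i : ℕ)).gcd c = 1 := by
  have hed : m - 1 ≤ d := le_trans (Nat.sub_le m 1) hmd
  have hdiag' : ∀ (k : Fin (m - 1)) (h : (k : ℕ) < d), B k ⟨k, h⟩ ≠ 0 :=
    fun k h => ne_of_gt (hdiag k h)
  have htail : ∀ (k : Fin (m - 1)) (i : Fin d), m - 1 ≤ (i : ℕ) → B k i = 0 :=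
    fun k i hi => htri k i (lt_of_lt_of_le k.isLt hi)
  set T : Finset (Fin d) := Finset.univ.filter fun i : Fin d => m - 1 ≤ (i : ℕ) with hT
  have hmemT : ∀ i : Fin d, i ∈ T ↔ m - 1 ≤ (i : ℕ) := by
    intro i; simp [hT]
  set sn := Fin.snoc (α := fun _ => Fin d → ℤ) B c with hsn
  have hsub : Submodule.span ℤ (Set.range B) ≤ Submodule.span ℤ (Set.range sn) :=
    Submodule.span_mono (by rintro _ ⟨k, rfl⟩; exact ⟨k.castSucc, by simp [hsn]⟩)
  have hsubR : Submodule.span ℝ (Set.range fun k => fun i => (B k i : ℝ)) ≤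
      Submodule.span ℝ (Set.range fun k => fun i => (sn k i : ℝ)) :=
    Submodule.span_mono (by rintro _ ⟨k, rfl⟩; exact ⟨k.castSucc, by simp [hsn]⟩)
  constructor
  · intro hprim
    have hex : ∃ i ∈ T, c i ≠ 0 := by
      by_contra hall
      push_neg at hall
      have hcR : (fun i => (c i : ℝ)) ∈
          Submodule.span ℝ (Set.range fun k => fun i => (B k i : ℝ)) := by
        apply mem_realSpan_of_support B hed htri hdiag'
        intro i hi
        have := hall i ((hmemT i).mpr hi)
        simp [this]
      have hc : c ∈ Submodule.span ℤ (Set.range B) := hB.2 c hcR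
      obtain ⟨w, hw⟩ := (Submodule.mem_span_range_iff_exists_fun ℤ).mp hc
      have hli := Fintype.linearIndependent_iff.mp hprim.1
      have h0 : ∑ k, (Fin.snoc (α := fun _ => ℤ) w (-1)) k • sn k = 0 := by
        rw [Fin.sum_univ_castSucc]
        simp only [hsn, Fin.snoc_castSucc, Fin.snoc_last]
        rw [hw]
        simp
      have hcontra := hli _ h0 (Fin.last _)
      simp at hcontra
    obtain ⟨i0, hi0T, hi0⟩ := hex
    set g : ℤ := T.gcd c with hgdef
    have hgnn : 0 ≤ g := by
      have h1 : |g| = g := by rw [Int.abs_eq_normalize, Finset.normalize_gcd]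
      rw [← h1]; exact abs_nonneg g
    have hgne : g ≠ 0 := fun h0 => hi0 (Finset.gcd_eq_zero_iff.mp h0 i0 hi0T)
    have hdvd : ∀ i ∈ T, g ∣ c i := fun i hi => Finset.gcd_dvd hi
    set x : Fin d → ℤ := fun i => if m - 1 ≤ (i : ℕ) then c i / g else 0 with hx
    have hxg : ∀ i ∈ T, x i * g = c i := by
      intro i hi
      simp only [hx, if_pos ((hmemT i).mp hi)]
      exact Int.ediv_mul_cancel (hdvd i hi)
    have hxR : (fun i => (x i : ℝ)) ∈
        Submodule.span ℝ (Set.range fun k => fun i => (sn k i : ℝ)) := by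
      set hv : Fin d → ℝ := fun i => if (i : ℕ) < m - 1 then (c i : ℝ) else 0 with hhv
      have hhmem : hv ∈ Submodule.span ℝ (Set.range fun k => fun i => (B k i : ℝ)) := by
        apply mem_realSpan_of_support B hed htri hdiag'
        intro i hi
        simp [hhv, Nat.not_lt.mpr hi]
      have hcmem : (fun i => (c i : ℝ)) ∈
          Submodule.span ℝ (Set.range fun k => fun i => (sn k i : ℝ)) :=
        Submodule.subset_span ⟨Fin.last _, by funext i; simp [hsn]⟩
      have hgR : (g : ℝ) ≠ 0 := Int.cast_ne_zero.mpr hgne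
      have hxeq : (fun i => (x i : ℝ)) =
          ((g : ℝ))⁻¹ • (fun i => (c i : ℝ)) - ((g : ℝ))⁻¹ • hv := by
        funext i
        by_cases hcase : m - 1 ≤ (i : ℕ)
        · simp only [Pi.sub_apply, Pi.smul_apply, smul_eq_mul, hx, if_pos hcase, hhv,
            if_neg (Nat.not_lt.mpr hcase)]
          have h3 : ((c i / g : ℤ) : ℝ) * (g : ℝ) = (c i : ℝ) := by
            exact_mod_cast Int.ediv_mul_cancel (hdvd i ((hmemT i).mpr hcase))
          field_simp
          linarith [h3]
        · simp only [Pi.sub_apply, Pi.smul_apply, smul_eq_mul, hx, if_neg hcase, hhv,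
            if_pos (Nat.not_le.mp hcase)]
          push_cast
          ring
      rw [hxeq]
      exact Submodule.sub_mem _ (Submodule.smul_mem _ _ hcmem)
        (Submodule.smul_mem _ _ (hsubR hhmem))
    have hxmem := hprim.2 x hxR
    obtain ⟨w, hw⟩ := (Submodule.mem_span_range_iff_exists_fun ℤ).mp hxmem
    have hkey : ∀ i ∈ T, w (Fin.last _) * c i = x i := by
      intro i hi
      have h1 := congrFun hw i
      simp only [Finset.sum_apply, Pi.smul_apply, smul_eq_mul] at h1
      rw [Fin.sum_univ_castSucc] at h1
      simp only [hsn, Fin.snoc_castSucc, Fin.snoc_last] at h1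
      have hz : ∀ k : Fin (m - 1), w k.castSucc * B k i = 0 := fun k => by
        rw [htail k i ((hmemT i).mp hi), mul_zero]
      rw [Finset.sum_congr rfl (fun k _ => hz k), Finset.sum_const_zero, zero_add] at h1
      exact h1
    have hunit : w (Fin.last _) * g = 1 := by
      have h1 := hkey i0 hi0T
      have h2 := hxg i0 hi0T
      have h3 : (w (Fin.last _) * g - 1) * c i0 = 0 := by linear_combination g * h1 + h2
      rcases mul_eq_zero.mp h3 with h | h
      · exact sub_eq_zero.mp h
      · exact absurd h hi0
    have hgu : IsUnit g := IsUnit.of_mul_eq_one (a := g) _ (by linarith [hunit, mul_comm (w (Fin.last (m-1))) g])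
    rcases Int.isUnit_iff.mp hgu with h1 | h1
    · exact h1
    · omega
  · intro hg
    have hex : ∃ i ∈ T, c i ≠ 0 := by
      by_contra hall
      push_neg at hall
      have h0 := Finset.gcd_eq_zero_iff.mpr hall
      rw [h0] at hg
      exact absurd hg (by norm_num)
    obtain ⟨i0, hi0T, hi0⟩ := hex
    constructor
    · apply Fintype.linearIndependent_iff.mpr
      intro w hw
      have hlast : w (Fin.last _) = 0 := by
        have h1 := congrFun hw i0
        simp only [Finset.sum_apply, Pi.smul_apply, smul_eq_mul, Pi.zero_apply] at h1
        rw [Fin.sum_univ_castSucc] at h1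
        simp only [hsn, Fin.snoc_castSucc, Fin.snoc_last] at h1
        have hz : ∀ k : Fin (m - 1), w k.castSucc * B k i0 = 0 := fun k => by
          rw [htail k i0 ((hmemT i0).mp hi0T), mul_zero]
        rw [Finset.sum_congr rfl (fun k _ => hz k), Finset.sum_const_zero, zero_add] at h1
        exact (mul_eq_zero.mp h1).resolve_right hi0
      have hB0 : ∑ k : Fin (m - 1), w k.castSucc • B k = 0 := by
        have h2 := hw
        rw [Fin.sum_univ_castSucc] at h2
        simp only [hsn, Fin.snoc_castSucc, Fin.snoc_last, hlast, zero_smul, add_zero] at h2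
        exact h2
      have hzero := Fintype.linearIndependent_iff.mp hB.1 _ hB0
      intro k
      exact Fin.lastCases hlast (fun j => hzero j) k
    · intro x hx
      obtain ⟨a, ha⟩ := (Submodule.mem_span_range_iff_exists_fun ℝ).mp hx
      set aL := a (Fin.last _) with haLdef
      have htaileq : ∀ i ∈ T, aL * (c i : ℝ) = (x i : ℝ) := by
        intro i hi
        have h1 := congrFun ha i
        simp only [Finset.sum_apply, Pi.smul_apply, smul_eq_mul] at h1
        rw [Fin.sum_univ_castSucc] at h1
        simp only [hsn, Fin.snoc_castSucc, Fin.snoc_last] at h1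
        have hz : ∀ k : Fin (m - 1), a k.castSucc * ((B k i : ℤ) : ℝ) = 0 := fun k => by
          rw [htail k i ((hmemT i).mp hi)]; simp
        rw [Finset.sum_congr rfl (fun k _ => hz k), Finset.sum_const_zero, zero_add] at h1
        exact h1
      obtain ⟨u, hu⟩ := gcd_eq_sum' T c
      rw [hg] at hu
      set nn : ℤ := ∑ i ∈ T, u i * x i with hnn
      have haLnn : aL = (nn : ℝ) := by
        calc aL = aL * ((∑ i ∈ T, u i * c i : ℤ) : ℝ) := by rw [hu]; push_cast; ring
          _ = ∑ i ∈ T, (u i : ℝ) * (aL * (c i : ℝ)) := by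
              push_cast
              rw [Finset.mul_sum]
              exact Finset.sum_congr rfl fun i _ => by ring
          _ = ∑ i ∈ T, (u i : ℝ) * (x i : ℝ) :=
              Finset.sum_congr rfl fun i hi => by rw [htaileq i hi]
          _ = (nn : ℝ) := by rw [hnn]; push_cast; ring
      set z : Fin d → ℤ := fun i => x i - nn * c i with hz
      have hzR : (fun i => (z i : ℝ)) ∈
          Submodule.span ℝ (Set.range fun k => fun i => (B k i : ℝ)) := by
        have hzeq : (fun i => (z i : ℝ)) =
            ∑ k : Fin (m - 1), a k.castSucc • (fun i => (B k i : ℝ)) := by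
          funext i
          simp only [Finset.sum_apply, Pi.smul_apply, smul_eq_mul, hz]
          have h1 := congrFun ha i
          simp only [Finset.sum_apply, Pi.smul_apply, smul_eq_mul] at h1
          rw [Fin.sum_univ_castSucc] at h1
          simp only [hsn, Fin.snoc_castSucc, Fin.snoc_last] at h1
          push_cast
          rw [← h1, ← haLnn]
          ring
        rw [hzeq]
        exact Submodule.sum_mem _ fun k _ =>
          Submodule.smul_mem _ _ (Submodule.subset_span ⟨k, rfl⟩)
      have hzmem := hB.2 z hzR
      have hxz : x = z + nn • c := by funext i; simp [hz]
      rw [hxz]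
      exact Submodule.add_mem _ (hsub hzmem)
        (Submodule.smul_mem _ _ (Submodule.subset_span ⟨Fin.last _, by simp [hsn]⟩))

lemma isPrimitive_vecMul_iff {d n : ℕ} (s : Fin n → Fin d → ℤ) {U : Matrix (Fin d) (Fin d) ℤ}
    (hU : IsUnit U.det) : IsPrimitive (fun k => s k ᵥ* U) ↔ IsPrimitive s := by
  constructor
  · intro h
    have hU' : IsUnit (U⁻¹).det := by
      rw [Matrix.det_nonsing_inv]
      exact isUnit_ringInverse.mpr hU
    have h2 := h.vecMul hU'
    have heq : (fun k => (s k ᵥ* U) ᵥ* U⁻¹) = s := by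
      funext k
      rw [Matrix.vecMul_vecMul, Matrix.mul_nonsing_inv U hU, Matrix.vecMul_one]
    rwa [heq] at h2
  · exact fun h => h.vecMul hU


/-- With `s₁,…,s_{m-1}` primitive (here the family `s : Fin (m-1) → ℤ^d`), `A` the
matrix with these rows and `U` unimodular with `AU` in Hermite normal form, appending
`s_m` gives a primitive set iff the numbers `s_m · U^{(i)}`, `m ≤ i ≤ d`
(0-indexed: `m - 1 ≤ i`), are relatively prime. -/
theorem snoc_primitive_iff_gcd_eq_one {d m : ℕ} (hm : 1 ≤ m) (hmd : m ≤ d)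
    (s : Fin (m - 1) → Fin d → ℤ) (hs : IsPrimitive s)
    (U : Matrix (Fin d) (Fin d) ℤ) (hU : U.det = 1 ∨ U.det = -1)
    (hHNF : IsHermiteNormalForm ((Matrix.of s) * U))
    (t : Fin d → ℤ) :
    IsPrimitive (Fin.snoc (α := fun _ => Fin d → ℤ) s t) ↔
      (Finset.univ.filter fun i : Fin d => m - 1 ≤ (i : ℕ)).gcd
        (fun i => ∑ j, t j * U j i) = 1 := by
  have hUu : IsUnit U.det := Int.isUnit_iff.mpr hU
  have hsnoc : (fun k => (Fin.snoc (α := fun _ => Fin d → ℤ) s t) k ᵥ* U)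
      = Fin.snoc (α := fun _ => Fin d → ℤ) (fun k => s k ᵥ* U) (t ᵥ* U) := by
    funext k
    refine Fin.lastCases ?_ ?_ k <;> simp
  have hBprim : IsPrimitive (fun k => s k ᵥ* U) := hs.vecMul hUu
  have hof : ∀ (k : Fin (m - 1)) (i : Fin d), (Matrix.of s * U) k i = (s k ᵥ* U) i := by
    intro k i; simp [Matrix.mul_apply, Matrix.vecMul, dotProduct]
  obtain ⟨h1, h2, _⟩ := hHNF
  have htri : ∀ (k : Fin (m - 1)) (i : Fin d), (k : ℕ) < (i : ℕ) → (s k ᵥ* U) i = 0 :=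
    fun k i h => by rw [← hof]; exact h1 k i h
  have hdiag : ∀ (k : Fin (m - 1)) (h : (k : ℕ) < d), 0 < (s k ᵥ* U) ⟨k, h⟩ :=
    fun k h => by rw [← hof]; exact h2 k h
  have hfun : (fun i : Fin d => ∑ j, t j * U j i) = t ᵥ* U := by
    funext i; simp [Matrix.vecMul, dotProduct]
  rw [hfun, ← isPrimitive_vecMul_iff _ hUu, hsnoc,
    step2 hm hmd _ hBprim htri hdiag]
end

section
/- Let s_1,...,s_m ∈ Z^d be linearly independent over R, A' the m×d matrix with rows s_1,...,s_m, and U a unimodular matrix such that the top (m-1)×d submatrix of A'U equals the first m-1 rows of the identity (padded with zeros). Then the index of the lattice span_Z{s_1,...,s_m} inside Z^d ∩ span_R{s_1,...,s_m} equals gcd{(A'U)_{mi} : m ≤ i ≤ d}. -/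
lemma finset_gcd_bezout {ι : Type*} [DecidableEq ι] (S : Finset ι) (f : ι → ℤ) :
    ∃ n : ι → ℤ, ∑ j ∈ S, n j * f j = S.gcd f := by
  classical
  induction S using Finset.induction_on with
  | empty => exact ⟨0, by simp⟩
  | insert a s ha ih =>
    obtain ⟨n, hn⟩ := ih
    set G := s.gcd f with hG
    set A := Int.gcdA (f a) G with hA
    set B := Int.gcdB (f a) G with hB
    refine ⟨fun j => if j = a then A else B * n j, ?_⟩
    rw [Finset.sum_insert ha, Finset.gcd_insert, ← Int.coe_gcd, Int.gcd_eq_gcd_ab]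
    simp only [if_pos rfl]
    rw [Finset.sum_congr rfl (fun j hj => by
      rw [if_neg (by rintro rfl; exact ha hj)])]
    have : ∑ j ∈ s, B * n j * f j = B * ∑ j ∈ s, n j * f j := by
      rw [Finset.mul_sum]; exact Finset.sum_congr rfl fun j _ => by ring
    rw [this, hn, ← hG, ← hA, ← hB]
    simp only [if_pos trivial]; ring

lemma finset_gcd_natAbs {ι : Type*} (S : Finset ι) (f : ι → ℤ) :
    S.gcd (fun i => (f i).natAbs) = (S.gcd f).natAbs := by
  classical
  induction S using Finset.induction_on with
  | empty => simp
  | insert a s ha ih =>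
    rw [Finset.gcd_insert, Finset.gcd_insert, ih, ← Int.coe_gcd]
    simp only [Int.natAbs_natCast]
    rfl

lemma aux_sum {R : Type*} [CommRing R] {d m : ℕ} (hm : 1 ≤ m) (hmd : m ≤ d)
    (t : Fin m → Fin d → R)
    (htop : ∀ (k : Fin m) (j : Fin d), (k : ℕ) < m - 1 →
      t k j = if (k : ℕ) = (j : ℕ) then 1 else 0)
    (c : Fin m → R) (j : Fin d) :
    ∑ k, c k * t k j =
      (if h : (j : ℕ) < m - 1 then c ⟨j, by omega⟩ else 0) +
        c ⟨m - 1, Nat.sub_lt hm Nat.one_pos⟩ * t ⟨m - 1, Nat.sub_lt hm Nat.one_pos⟩ j := by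
  classical
  set M1 : Fin m := ⟨m - 1, Nat.sub_lt hm Nat.one_pos⟩ with hM1
  rw [← Finset.sum_erase_add _ _ (Finset.mem_univ M1)]
  congr 1
  have hlt : ∀ k ∈ Finset.univ.erase M1, (k : ℕ) < m - 1 := by
    intro k hk
    have hk' : k ≠ M1 := (Finset.mem_erase.mp hk).1
    have : (k : ℕ) ≠ m - 1 := fun h => hk' (Fin.ext h)
    omega
  rw [Finset.sum_congr rfl (fun k hk => by
    rw [htop k j (hlt k hk), mul_ite, mul_one, mul_zero])]
  by_cases hj : (j : ℕ) < m - 1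
  · rw [dif_pos hj]
    set j' : Fin m := ⟨j, by omega⟩ with hj'
    have : ∀ k : Fin m, ((k : ℕ) = (j : ℕ)) = (k = j') := by
      intro k; simp [hj', Fin.ext_iff]
    simp only [this]
    rw [Finset.sum_ite_eq' (Finset.univ.erase M1) j' c]
    rw [if_pos (Finset.mem_erase.mpr ⟨by simp [hj', hM1, Fin.ext_iff]; omega, Finset.mem_univ _⟩)]
  · rw [dif_neg hj]
    apply Finset.sum_eq_zero
    intro k hk
    rw [if_neg]
    have := hlt k hk
    omega

def realSpanLattice {d m : ℕ} (s : Fin m → Fin d → ℤ) : AddSubgroup (Fin d → ℤ) where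
  carrier := {x | (fun i => (x i : ℝ)) ∈
    Submodule.span ℝ (Set.range fun k => fun i => (s k i : ℝ))}
  zero_mem' := by
    have : (fun i : Fin d => (((0 : Fin d → ℤ) i : ℝ))) = 0 := by
      funext i; simp
    simp only [Set.mem_setOf_eq, this]
    exact Submodule.zero_mem _
  add_mem' := by
    intro a b ha hb
    have : (fun i : Fin d => (((a + b) i : ℝ))) =
        (fun i => (a i : ℝ)) + (fun i => (b i : ℝ)) := by
      funext i; simp [Pi.add_apply]
    simp only [Set.mem_setOf_eq, this]
    exact Submodule.add_mem _ ha hb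
  neg_mem' := by
    intro a ha
    have : (fun i : Fin d => (((-a) i : ℝ))) = -(fun i => (a i : ℝ)) := by
      funext i; simp [Pi.neg_apply]
    simp only [Set.mem_setOf_eq, this]
    exact Submodule.neg_mem _ ha

/-- If `s₁,…,s_m ∈ ℤ^d` are linearly independent over `ℝ`, `A'` is the matrix with
rows `s₁,…,s_m`, and `U` is unimodular with the top `m-1` rows of `A'U` equal to the
first `m-1` rows of the identity, then the index of `span_ℤ {s₁,…,s_m}` inside
`ℤ^d ∩ span_ℝ {s₁,…,s_m}` equals `gcd {(A'U)_{mi} : m ≤ i ≤ d}`. -/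
theorem index_eq_gcd {d m : ℕ} (hm : 1 ≤ m) (hmd : m ≤ d)
    (s : Fin m → Fin d → ℤ)
    (hind : LinearIndependent ℝ (fun k => fun i => (s k i : ℝ)))
    (U : Matrix (Fin d) (Fin d) ℤ) (hU : U.det = 1 ∨ U.det = -1)
    (htop : ∀ (i : Fin m) (j : Fin d), (i : ℕ) < m - 1 →
      ((Matrix.of s) * U) i j = if (i : ℕ) = (j : ℕ) then 1 else 0) :
    ((Submodule.span ℤ (Set.range s)).toAddSubgroup).relIndex (realSpanLattice s) =
      (Finset.univ.filter fun i : Fin d => m - 1 ≤ (i : ℕ)).gcd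
        (fun i => (((Matrix.of s) * U) ⟨m - 1, by omega⟩ i).natAbs) := by
  classical
  set M1 : Fin m := ⟨m - 1, by omega⟩ with hM1
  set t : Fin m → Fin d → ℤ := fun k => (Matrix.of s * U) k with ht
  set S : Finset (Fin d) := Finset.univ.filter fun i : Fin d => m - 1 ≤ (i : ℕ) with hS
  set G : ℤ := S.gcd (fun i => t M1 i) with hG
  set g : ℕ := G.natAbs with hg
  -- basic matrix facts
  have hUdet : IsUnit U.det := Int.isUnit_iff.mpr hU
  set V : Matrix (Fin d) (Fin d) ℤ := U⁻¹ with hV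
  have hUV : U * V = 1 := Matrix.mul_nonsing_inv U hUdet
  have hVU : V * U = 1 := Matrix.nonsing_inv_mul U hUdet
  have htv : ∀ k, t k = Matrix.vecMul (s k) U := by
    intro k; funext j
    simp [ht, Matrix.mul_apply, Matrix.vecMul, dotProduct]
  -- cast machinery
  set castR : (Fin d → ℤ) → (Fin d → ℝ) := fun x i => (x i : ℝ) with hcastR
  set UR : Matrix (Fin d) (Fin d) ℝ := U.map (fun a => (a : ℝ)) with hUR
  set VR : Matrix (Fin d) (Fin d) ℝ := V.map (fun a => (a : ℝ)) with hVR
  have hcastvec : ∀ (A : Matrix (Fin d) (Fin d) ℤ) (x : Fin d → ℤ),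
      castR (Matrix.vecMul x A) = Matrix.vecMul (castR x) (A.map (fun a => (a : ℝ))) := by
    intro A x; funext j
    simp only [hcastR, Matrix.vecMul, dotProduct, Matrix.map_apply]
    push_cast
    rfl
  have hmapmul : ∀ (A B : Matrix (Fin d) (Fin d) ℤ),
      (A.map fun a => (a : ℝ)) * (B.map fun a => (a : ℝ)) = (A * B).map (fun a => (a : ℝ)) := by
    intro A B
    ext i j
    simp only [Matrix.mul_apply, Matrix.map_apply]
    push_cast
    rfl
  have hURVR : UR * VR = 1 := by
    rw [hUR, hVR, hmapmul, hUV]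
    ext i j
    simp [Matrix.map_apply, Matrix.one_apply, apply_ite]
  have hVRUR : VR * UR = 1 := by
    rw [hUR, hVR, hmapmul, hVU]
    ext i j
    simp [Matrix.map_apply, Matrix.one_apply, apply_ite]
  -- the rows of t over ℝ
  set tR : Fin m → Fin d → ℝ := fun k => castR (t k) with htR
  set sR : Fin m → Fin d → ℝ := fun k => castR (s k) with hsR
  have htsR : ∀ k, tR k = Matrix.vecMul (sR k) UR := by
    intro k
    show castR (t k) = Matrix.vecMul (castR (s k)) UR
    rw [htv k, hcastvec]
  have hsRt : ∀ k, sR k = Matrix.vecMul (tR k) VR := by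
    intro k
    rw [htsR k, Matrix.vecMul_vecMul, hURVR, Matrix.vecMul_one]
  have htopt : ∀ (k : Fin m) (j : Fin d), (k : ℕ) < m - 1 →
      t k j = if (k : ℕ) = (j : ℕ) then 1 else 0 := htop
  have htopR : ∀ (k : Fin m) (j : Fin d), (k : ℕ) < m - 1 →
      tR k j = if (k : ℕ) = (j : ℕ) then 1 else 0 := by
    intro k j h
    have := htopt k j h
    simp only [htR, hcastR]
    rw [this]
    split <;> simp
  have hindT : LinearIndependent ℝ tR := by
    have hker : LinearMap.ker (Matrix.vecMulLinear UR) = ⊥ := by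
      rw [LinearMap.ker_eq_bot]
      intro x y h
      have h2 := congrArg (fun z => Matrix.vecMul z VR) h
      simpa [Matrix.vecMulLinear_apply, Matrix.vecMul_vecMul, hURVR,
        Matrix.vecMul_one] using h2
    have h3 := hind.map' (Matrix.vecMulLinear UR) hker
    have heq : (⇑(Matrix.vecMulLinear UR) ∘ sR) = tR := by
      funext k
      rw [Function.comp_apply, Matrix.vecMulLinear_apply, ← htsR k]
    rwa [heq] at h3
  -- G is nonzero
  have hGne : G ≠ 0 := by
    intro h0
    have hall : ∀ j ∈ S, t M1 j = 0 := by
      intro j hj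
      exact Finset.gcd_eq_zero_iff.mp (hG ▸ h0) j hj
    set c : Fin m → ℝ := fun k => if k = M1 then -1 else (t M1 ⟨k, by omega⟩ : ℝ) with hc
    have hsum : ∑ k, c k • tR k = 0 := by
      funext j
      rw [Finset.sum_apply, Pi.zero_apply]
      simp only [Pi.smul_apply, smul_eq_mul]
      rw [aux_sum hm hmd tR htopR c j]
      have hcM1 : c M1 = -1 := by rw [hc]; simp
      by_cases hj : (j : ℕ) < m - 1
      · rw [dif_pos hj, hcM1]
        have hne : (⟨(j : ℕ), by omega⟩ : Fin m) ≠ M1 := by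
          simp [hM1, Fin.ext_iff]; omega
        rw [hc]
        simp only [if_neg hne]
        have hjj : (⟨(j : ℕ), by omega⟩ : Fin d) = j := by ext; rfl
        rw [hjj]
        have : tR M1 j = (t M1 j : ℝ) := rfl
        rw [this]
        ring
      · rw [dif_neg hj, hcM1]
        have hjS : j ∈ S := by
          rw [hS]; simp; omega
        have : tR M1 j = (t M1 j : ℝ) := rfl
        rw [this, hall j hjS]
        simp
    have := Fintype.linearIndependent_iff.mp hindT c hsum M1
    rw [hc] at this
    simp at this
  -- Bezout coefficients
  obtain ⟨n, hn⟩ := finset_gcd_bezout S (fun i => t M1 i)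
  rw [← hG] at hn
  have hGdvd : ∀ j ∈ S, G ∣ t M1 j := by
    intro j hj
    rw [hG]
    exact Finset.gcd_dvd hj
  -- specialized coordinate lemmas
  have hauxZ : ∀ (c : Fin m → ℤ) (j : Fin d), ∑ k, c k * t k j =
      (if h : (j : ℕ) < m - 1 then c ⟨j, by omega⟩ else 0) + c M1 * t M1 j :=
    fun c j => aux_sum hm hmd t htopt c j
  have hauxR : ∀ (c : Fin m → ℝ) (j : Fin d), ∑ k, c k * tR k j =
      (if h : (j : ℕ) < m - 1 then c ⟨j, by omega⟩ else 0) + c M1 * tR M1 j :=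
    fun c j => aux_sum hm hmd tR htopR c j
  have hcastU : ∀ x, castR (Matrix.vecMul x U) = Matrix.vecMul (castR x) UR := by
    intro x; rw [hUR]; exact hcastvec U x
  have hcastV : ∀ x, castR (Matrix.vecMul x V) = Matrix.vecMul (castR x) VR := by
    intro x; rw [hVR]; exact hcastvec V x
  -- the additive map F
  have hFadd : ∀ x y : Fin d → ℤ,
      (∑ j ∈ S, n j * Matrix.vecMul (x + y) U j) =
      (∑ j ∈ S, n j * Matrix.vecMul x U j) + (∑ j ∈ S, n j * Matrix.vecMul y U j) := by
    intro x y
    rw [← Finset.sum_add_distrib]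
    refine Finset.sum_congr rfl fun j hj => ?_
    rw [Matrix.add_vecMul]
    simp [mul_add]
  set F : (Fin d → ℤ) →+ ℤ :=
    AddMonoidHom.mk' (fun x => ∑ j ∈ S, n j * Matrix.vecMul x U j) hFadd with hF
  have hFapply : ∀ x, F x = ∑ j ∈ S, n j * Matrix.vecMul x U j := fun x => rfl
  -- span → divisibility
  have hspan_dvd : ∀ x ∈ Submodule.span ℤ (Set.range s), G ∣ F x := by
    intro x hx
    obtain ⟨b, hb⟩ := (Submodule.mem_span_range_iff_exists_fun ℤ).mp hx
    have hxU : Matrix.vecMul x U = ∑ k, b k • t k := by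
      rw [← hb, ← Matrix.vecMulLinear_apply, map_sum]
      refine Finset.sum_congr rfl fun k _ => ?_
      rw [map_smul, Matrix.vecMulLinear_apply, ← htv k]
    have hFx : F x = b M1 * G := by
      rw [hFapply, ← hn, Finset.mul_sum]
      refine Finset.sum_congr rfl fun j hj => ?_
      have hj' : ¬ ((j : ℕ) < m - 1) := by
        rw [hS] at hj; simp at hj; omega
      have h2 : Matrix.vecMul x U j = ∑ k, b k * t k j := by
        rw [hxU, Finset.sum_apply]
        simp [Pi.smul_apply, smul_eq_mul]
      rw [h2, hauxZ b j, dif_neg hj']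
      ring
    exact ⟨b M1, by rw [hFx]; ring⟩
  -- divisibility → span
  have hdvd_span : ∀ x, x ∈ realSpanLattice s → G ∣ F x →
      x ∈ Submodule.span ℤ (Set.range s) := by
    intro x hx hdvd
    have hx' : castR x ∈ Submodule.span ℝ (Set.range sR) := hx
    obtain ⟨c, hc⟩ := (Submodule.mem_span_range_iff_exists_fun ℝ).mp hx'
    have hxUR : castR (Matrix.vecMul x U) = ∑ k, c k • tR k := by
      rw [hcastU, ← hc, ← Matrix.vecMulLinear_apply, map_sum]
      refine Finset.sum_congr rfl fun k _ => ?_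
      rw [map_smul, Matrix.vecMulLinear_apply, ← htsR k]
    obtain ⟨a, ha⟩ := hdvd
    have hcoord : ∀ j ∈ S, ((Matrix.vecMul x U) j : ℝ) = c M1 * (t M1 j : ℝ) := by
      intro j hj
      have hj' : ¬ ((j : ℕ) < m - 1) := by
        rw [hS] at hj; simp at hj; omega
      have h1 : castR (Matrix.vecMul x U) j = ∑ k, c k * tR k j := by
        rw [hxUR, Finset.sum_apply]
        simp [Pi.smul_apply, smul_eq_mul]
      have h1' : ((Matrix.vecMul x U) j : ℝ) = ∑ k, c k * tR k j := h1
      rw [h1', hauxR c j, dif_neg hj']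
      have h3 : tR M1 j = (t M1 j : ℝ) := rfl
      rw [h3]; ring
    have hnR : ((G : ℤ) : ℝ) = ∑ j ∈ S, (n j : ℝ) * (t M1 j : ℝ) := by
      have := congrArg (fun z : ℤ => (z : ℝ)) hn
      push_cast at this
      exact this.symm
    have hFreal : (F x : ℝ) = c M1 * (G : ℝ) := by
      rw [hFapply]
      push_cast
      rw [Finset.sum_congr rfl (fun j hj => by
        rw [hcoord j hj] :
        ∀ j ∈ S, (n j : ℝ) * ((Matrix.vecMul x U) j : ℝ)
          = (n j : ℝ) * (c M1 * (t M1 j : ℝ)))]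
      rw [hnR, Finset.mul_sum]
      exact Finset.sum_congr rfl fun j _ => by ring
    have hGR : (G : ℝ) ≠ 0 := Int.cast_ne_zero.mpr hGne
    have hcM1 : c M1 = (a : ℝ) := by
      have h2 : (F x : ℝ) = (G : ℝ) * (a : ℝ) := by exact_mod_cast congrArg (fun z : ℤ => (z : ℝ)) ha
      rw [hFreal] at h2
      exact mul_right_cancel₀ hGR (by rw [h2]; ring)
    set b : Fin m → ℤ := fun k =>
      if k = M1 then a
      else Matrix.vecMul x U ⟨k, by omega⟩ - a * t M1 ⟨k, by omega⟩ with hbdef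
    have hbM1 : b M1 = a := by rw [hbdef]; simp
    have hxUb : Matrix.vecMul x U = ∑ k, b k • t k := by
      funext j
      rw [Finset.sum_apply]
      simp only [Pi.smul_apply, smul_eq_mul]
      rw [hauxZ b j]
      by_cases hj : (j : ℕ) < m - 1
      · rw [dif_pos hj, hbM1, hbdef]
        have hne : (⟨(j : ℕ), by omega⟩ : Fin m) ≠ M1 := by
          simp [hM1, Fin.ext_iff]; omega
        simp only [if_neg hne]
        have hjj : (⟨(j : ℕ), by omega⟩ : Fin d) = j := by ext; rfl
        rw [hjj]
        ring
      · rw [dif_neg hj, hbM1]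
        have hjS : j ∈ S := by rw [hS]; simp; omega
        have h4 : ((Matrix.vecMul x U j : ℤ) : ℝ) = ((a * t M1 j : ℤ) : ℝ) := by
          push_cast
          rw [hcoord j hjS, hcM1]
        have h5 := Int.cast_injective h4
        rw [h5]; ring
    have hxs : x = ∑ k, b k • s k := by
      have h5 : x = Matrix.vecMul (Matrix.vecMul x U) V := by
        rw [Matrix.vecMul_vecMul, hUV, Matrix.vecMul_one]
      rw [h5, hxUb, ← Matrix.vecMulLinear_apply, map_sum]
      refine Finset.sum_congr rfl fun k _ => ?_
      rw [map_smul, Matrix.vecMulLinear_apply, htv k, Matrix.vecMul_vecMul, hUV,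
        Matrix.vecMul_one]
    exact (Submodule.mem_span_range_iff_exists_fun ℤ).mpr ⟨b, hxs.symm⟩
  -- the homomorphism to ZMod g
  set K := realSpanLattice s with hK
  set ψ : K →+ ZMod g := (Int.castAddHom (ZMod g)).comp (F.comp K.subtype) with hψ
  have hψapply : ∀ x : K, ψ x = ((F x : ℤ) : ZMod g) := fun x => rfl
  have hker : ψ.ker = ((Submodule.span ℤ (Set.range s)).toAddSubgroup).addSubgroupOf K := by
    ext x
    rw [AddMonoidHom.mem_ker, AddSubgroup.mem_addSubgroupOf, Submodule.mem_toAddSubgroup,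
      hψapply, ZMod.intCast_zmod_eq_zero_iff_dvd]
    have hgG : ((g : ℕ) : ℤ) ∣ F ↑x ↔ G ∣ F ↑x := by rw [hg]; exact Int.natAbs_dvd
    rw [hgG]
    exact ⟨fun h => hdvd_span ↑x x.2 h, fun h => hspan_dvd ↑x h⟩
  have hsurj : Function.Surjective ψ := by
    intro z
    obtain ⟨nz, rfl⟩ := ZMod.intCast_surjective z
    set w : Fin d → ℤ := fun j => t M1 j / G with hwdef
    have hw : ∀ j ∈ S, t M1 j = G * w j := fun j hj => (Int.mul_ediv_cancel' (hGdvd j hj)).symm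
    set x' : Fin d → ℤ := fun j => if m - 1 ≤ (j : ℕ) then nz * w j else 0 with hx'def
    have hsumw : ∑ j ∈ S, n j * w j = 1 := by
      have h6 : G * ∑ j ∈ S, n j * w j = G := by
        rw [Finset.mul_sum]
        calc ∑ j ∈ S, G * (n j * w j) = ∑ j ∈ S, n j * t M1 j :=
              Finset.sum_congr rfl fun j hj => by rw [hw j hj]; ring
          _ = G := hn
      exact mul_left_cancel₀ hGne (by rw [h6, mul_one])
    set x : Fin d → ℤ := Matrix.vecMul x' V with hxdef
    have hxU : Matrix.vecMul x U = x' := by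
      rw [hxdef, Matrix.vecMul_vecMul, hVU, Matrix.vecMul_one]
    have hFx : F x = nz := by
      rw [hFapply, hxU]
      have h7 : ∀ j ∈ S, n j * x' j = nz * (n j * w j) := by
        intro j hj
        rw [hx'def]
        have hjm : m - 1 ≤ (j : ℕ) := by rw [hS] at hj; simpa using hj
        simp only [if_pos hjm]
        ring
      rw [Finset.sum_congr rfl h7, ← Finset.mul_sum, hsumw, mul_one]
    have hGR : (G : ℝ) ≠ 0 := Int.cast_ne_zero.mpr hGne
    set c : Fin m → ℝ := fun k =>
      if k = M1 then (nz : ℝ) / (G : ℝ)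
      else -((nz : ℝ) / (G : ℝ)) * (t M1 ⟨k, by omega⟩ : ℝ) with hcdef
    have hcM1 : c M1 = (nz : ℝ) / (G : ℝ) := by rw [hcdef]; simp
    have hx'R : castR x' = ∑ k, c k • tR k := by
      funext j
      rw [Finset.sum_apply]
      simp only [Pi.smul_apply, smul_eq_mul]
      rw [hauxR c j]
      by_cases hj : (j : ℕ) < m - 1
      · rw [dif_pos hj, hcM1, hcdef]
        have hne : (⟨(j : ℕ), by omega⟩ : Fin m) ≠ M1 := by
          simp [hM1, Fin.ext_iff]; omega
        simp only [if_neg hne]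
        have hjj : (⟨(j : ℕ), by omega⟩ : Fin d) = j := by ext; rfl
        rw [hjj]
        have h8 : castR x' j = 0 := by
          rw [hx'def]
          simp only [hcastR]
          rw [if_neg (by omega : ¬ m - 1 ≤ (j : ℕ))]
          simp
        rw [h8]
        have h3 : tR M1 j = (t M1 j : ℝ) := rfl
        rw [h3]; ring
      · rw [dif_neg hj, hcM1]
        have hjS : j ∈ S := by rw [hS]; simp; omega
        have h8 : castR x' j = (nz : ℝ) * (w j : ℝ) := by
          rw [hx'def]
          simp only [hcastR]
          rw [if_pos (by omega : m - 1 ≤ (j : ℕ))]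
          push_cast
          ring
        rw [h8]
        have h3 : tR M1 j = (t M1 j : ℝ) := rfl
        have h9 : ((t M1 j : ℤ) : ℝ) = (G : ℝ) * (w j : ℝ) := by
          rw [hw j hjS]; push_cast; ring
        rw [h3, h9]
        field_simp
        ring
    have hxK : x ∈ realSpanLattice s := by
      show castR x ∈ Submodule.span ℝ (Set.range sR)
      have h9 : castR x = ∑ k, c k • sR k := by
        rw [hxdef, hcastV, hx'R, ← Matrix.vecMulLinear_apply, map_sum]
        refine Finset.sum_congr rfl fun k _ => ?_
        rw [map_smul, Matrix.vecMulLinear_apply, ← hsRt k]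
      rw [h9]
      exact (Submodule.mem_span_range_iff_exists_fun ℝ).mpr ⟨c, rfl⟩
    exact ⟨⟨x, hxK⟩, by rw [hψapply, hFx]⟩
  -- conclusion
  have hfinal : ((Submodule.span ℤ (Set.range s)).toAddSubgroup).relIndex K = g := by
    show (((Submodule.span ℤ (Set.range s)).toAddSubgroup).addSubgroupOf K).index = g
    rw [← hker, AddSubgroup.index_ker,
      (AddMonoidHom.range_eq_top.mpr hsurj : ψ.range = ⊤)]
    calc Nat.card ↥(⊤ : AddSubgroup (ZMod g)) = Nat.card (ZMod g) :=
          Nat.card_congr AddSubgroup.topEquiv.toEquiv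
      _ = g := Nat.card_zmod g
  have hrhs : (Finset.univ.filter fun i : Fin d => m - 1 ≤ (i : ℕ)).gcd
      (fun i => (((Matrix.of s) * U) ⟨m - 1, by omega⟩ i).natAbs) = g := by
    rw [hg, hG]
    exact finset_gcd_natAbs S (fun i => t M1 i)
  exact hfinal.trans hrhs.symm
end

section
/- Given a rank-p integer matrix A ∈ Z^{p×q} with all entries of absolute value less than M_0, there exists a unimodular matrix U ∈ Z^{q×q} such that AU is in Hermite normal form and every entry of U satisfies |U_{ij}| ≤ p! · q · M_0^p. -/
open Matrix

namespace HNFAux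



def unimod {n : ℕ} (M : Matrix (Fin n) (Fin n) ℤ) : Prop := M.det = 1 ∨ M.det = -1

lemma unimod.mul {n} {M N : Matrix (Fin n) (Fin n) ℤ} (hM : unimod M) (hN : unimod N) :
    unimod (M * N) := by
  unfold unimod at *
  rw [Matrix.det_mul]
  rcases hM with h|h <;> rcases hN with h'|h' <;> simp [h, h']

lemma unimod.one {n} : unimod (1 : Matrix (Fin n) (Fin n) ℤ) := Or.inl Matrix.det_one

lemma vecMul_transvection {n : ℕ} (a : Fin n → ℤ) {i j : Fin n} (c : ℤ) :
    Matrix.vecMul a (Matrix.transvection i j c) = Function.update a j (a j + a i * c) := by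
  funext l
  rw [Matrix.transvection, Matrix.vecMul_add, Matrix.vecMul_one]
  simp only [Pi.add_apply]
  have : Matrix.vecMul a (Matrix.single i j c) l = if l = j then a i * c else 0 := by
    simp only [Matrix.vecMul, dotProduct, Matrix.single, Matrix.of_apply, ite_and,
      mul_ite, mul_zero]
    rw [Finset.sum_eq_single i]
    · by_cases h : l = j <;> simp [h, eq_comm] <;> simp [Ne.symm h]
    · intro b _ hb; simp [Ne.symm hb]
    · simp
  rw [this]
  by_cases hl : l = j
  · subst hl; simp [Function.update_self]
  · simp [Function.update_of_ne hl, hl]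

lemma vecMul_permMatrix {n : ℕ} (a : Fin n → ℤ) (σ : Equiv.Perm (Fin n)) (j : Fin n) :
    Matrix.vecMul a (σ.permMatrix ℤ) j = a (σ.symm j) := by
  simp only [Matrix.vecMul, dotProduct, Equiv.Perm.permMatrix, PEquiv.toMatrix,
    Equiv.toPEquiv, Matrix.of_apply, Option.mem_def, Option.some.injEq, mul_ite, mul_one, mul_zero]
  rw [Finset.sum_eq_single (σ.symm j)]
  · simp
  · intro b _ hb
    have : ¬ σ b = j := fun h => hb (by simp [← h])
    simp [this]
  · simp




/-- measure for the euclidean column reduction -/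
def mu {n : ℕ} (a : Fin (n+1) → ℤ) : ℕ :=
  2 * (∑ j, (a j).natAbs) + (if a 0 = 0 then 1 else 0)

lemma emod_bounds {a b : ℤ} (hb : b ≠ 0) : 0 ≤ a % b ∧ a % b < |b| := by
  refine ⟨Int.emod_nonneg a hb, ?_⟩
  rcases lt_or_gt_of_ne hb with h | h
  · have h2 := Int.emod_lt_of_pos a (b := -b) (by omega)
    rw [Int.emod_neg] at h2
    rw [abs_of_neg h]
    omega
  · have h2 := Int.emod_lt_of_pos a h
    rw [abs_of_pos h]
    omega

lemma sum_natAbs_update {n : ℕ} (a : Fin n → ℤ) (j : Fin n) (v : ℤ) :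
    (∑ k, ((Function.update a j v) k).natAbs) + (a j).natAbs
      = (∑ k, (a k).natAbs) + v.natAbs := by
  classical
  have h1 : ∑ k, ((Function.update a j v) k).natAbs
      = v.natAbs + ∑ k ∈ Finset.univ.erase j, (a k).natAbs := by
    rw [← Finset.add_sum_erase _ (fun k => ((Function.update a j v) k).natAbs)
      (Finset.mem_univ j)]
    congr 1
    · simp
    · exact Finset.sum_congr rfl fun k hk => by
        rw [Function.update_of_ne (Finset.mem_erase.mp hk).1]
  have h2 : ∑ k, (a k).natAbs
      = (a j).natAbs + ∑ k ∈ Finset.univ.erase j, (a k).natAbs :=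
    (Finset.add_sum_erase _ (fun k => (a k).natAbs) (Finset.mem_univ j)).symm
  omega

lemma rowReduce {n : ℕ} (a : Fin (n+1) → ℤ) :
    ∃ V : Matrix (Fin (n+1)) (Fin (n+1)) ℤ, unimod V ∧
      (∀ j, j ≠ 0 → Matrix.vecMul a V j = 0) ∧ 0 ≤ Matrix.vecMul a V 0 := by
  suffices H : ∀ N (a : Fin (n+1) → ℤ), mu a ≤ N → ∃ V : Matrix (Fin (n+1)) (Fin (n+1)) ℤ,
      unimod V ∧ (∀ j, j ≠ 0 → Matrix.vecMul a V j = 0) ∧ 0 ≤ Matrix.vecMul a V 0 from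
    H (mu a) a le_rfl
  intro N
  induction N using Nat.strong_induction_on with
  | _ N IH =>
  intro a hle
  by_cases hz : ∀ j, j ≠ (0 : Fin (n+1)) → a j = 0
  · refine ⟨Matrix.diagonal (fun k => if a k < 0 then -1 else 1), ?_, ?_, ?_⟩
    · have : (Matrix.diagonal (fun k : Fin (n+1) => if a k < 0 then (-1:ℤ) else 1)).det
          = ∏ k, (if a k < 0 then (-1:ℤ) else 1) := Matrix.det_diagonal
      rw [unimod, this]
      refine Finset.prod_induction _ (fun x => x = 1 ∨ x = -1) ?_ (Or.inl rfl) ?_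
      · rintro x y (hx|hx) (hy|hy) <;> simp [hx, hy]
      · intro k _; split <;> simp
    · intro j hj
      rw [Matrix.vecMul_diagonal, hz j hj, zero_mul]
    · rw [Matrix.vecMul_diagonal]
      split <;> rename_i h
      · nlinarith
      · simpa using not_lt.mp h
  · push_neg at hz
    obtain ⟨j₀, hj₀, haj₀⟩ := hz
    by_cases h0 : a 0 = 0
    · -- swap columns 0 and j₀
      set E := (Equiv.swap (0 : Fin (n+1)) j₀).permMatrix ℤ with hE
      set a' := Matrix.vecMul a E with ha'
      have ha'j : ∀ j, a' j = a (Equiv.swap (0 : Fin (n+1)) j₀ j) := by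
        intro j; rw [ha', vecMul_permMatrix, Equiv.symm_swap]
      have hsum : ∑ j, (a' j).natAbs = ∑ j, (a j).natAbs := by
        simp only [ha'j]
        exact Fintype.sum_equiv (Equiv.swap 0 j₀) _ _ (fun j => rfl)
      have hmu : mu a' < mu a := by
        unfold mu
        rw [hsum]
        have h1 : a' 0 = a j₀ := by rw [ha'j]; simp
        simp [h1, haj₀, h0]
      obtain ⟨V', hV', hz', hp'⟩ := IH (mu a') (lt_of_lt_of_le hmu hle) a' le_rfl
      refine ⟨E * V', ?_, ?_, ?_⟩
      · have hdE : unimod E := by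
          rw [unimod, hE, Matrix.det_permutation, Equiv.Perm.sign_swap (Ne.symm hj₀)]
          simp
        exact hdE.mul hV'
      · intro j hj; rw [← Matrix.vecMul_vecMul, ← ha']; exact hz' j hj
      · rw [← Matrix.vecMul_vecMul, ← ha']; exact hp'
    · by_cases hc : (a 0).natAbs ≤ (a j₀).natAbs
      · -- reduce a j₀ modulo a 0
        set c := -(a j₀ / a 0) with hcdef
        set E := Matrix.transvection 0 j₀ c with hE
        set a' := Matrix.vecMul a E with ha'
        have hupd : a' = Function.update a j₀ (a j₀ + a 0 * c) := by
          rw [ha', hE, vecMul_transvection]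
        have hval : a j₀ + a 0 * c = a j₀ % a 0 := by
          rw [hcdef, Int.emod_def]; ring
        have hb := emod_bounds (a := a j₀) h0
        have hb' : a j₀ % a 0 < ((a 0).natAbs : ℤ) := by
          rw [← Int.abs_eq_natAbs]; exact hb.2
        have hlt : (a j₀ + a 0 * c).natAbs < (a j₀).natAbs := by
          rw [hval]
          have h1 : (a 0).natAbs ≤ (a j₀).natAbs := hc
          omega
        have hmu : mu a' < mu a := by
          have h00 : a' 0 = a 0 := by rw [hupd, Function.update_of_ne (Ne.symm hj₀)]
          have hS : (∑ k, (a' k).natAbs) + (a j₀).natAbs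
              = (∑ k, (a k).natAbs) + (a j₀ + a 0 * c).natAbs := by
            rw [hupd]; exact sum_natAbs_update a j₀ _
          unfold mu
          rw [h00, if_neg h0]
          omega
        obtain ⟨V', hV', hz', hp'⟩ := IH (mu a') (lt_of_lt_of_le hmu hle) a' le_rfl
        refine ⟨E * V', ?_, ?_, ?_⟩
        · have hdE : unimod E := by
            rw [unimod, hE, Matrix.det_transvection_of_ne _ _ (Ne.symm hj₀)]
            exact Or.inl rfl
          exact hdE.mul hV'
        · intro j hj; rw [← Matrix.vecMul_vecMul, ← ha']; exact hz' j hj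
        · rw [← Matrix.vecMul_vecMul, ← ha']; exact hp'
      · -- reduce a 0 modulo a j₀
        set c := -(a 0 / a j₀) with hcdef
        set E := Matrix.transvection j₀ 0 c with hE
        set a' := Matrix.vecMul a E with ha'
        have hupd : a' = Function.update a 0 (a 0 + a j₀ * c) := by
          rw [ha', hE, vecMul_transvection]
        have hval : a 0 + a j₀ * c = a 0 % a j₀ := by
          rw [hcdef, Int.emod_def]; ring
        have hb := emod_bounds (a := a 0) haj₀
        have hb' : a 0 % a j₀ < ((a j₀).natAbs : ℤ) := by
          rw [← Int.abs_eq_natAbs]; exact hb.2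
        have hlt : (a 0 + a j₀ * c).natAbs < (a 0).natAbs := by
          rw [hval]
          have h1 : (a j₀).natAbs < (a 0).natAbs := by omega
          omega
        have hmu : mu a' < mu a := by
          have hS : (∑ k, (a' k).natAbs) + (a 0).natAbs
              = (∑ k, (a k).natAbs) + (a 0 + a j₀ * c).natAbs := by
            rw [hupd]; exact sum_natAbs_update a 0 _
          have hup : mu a' ≤ 2 * (∑ k, (a' k).natAbs) + 1 := by
            unfold mu; split <;> omega
          have hdn : mu a = 2 * (∑ k, (a k).natAbs) := by
            unfold mu; rw [if_neg h0]; omega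
          have hane : (a 0).natAbs ≠ 0 := by
            intro h; exact h0 (Int.natAbs_eq_zero.mp h)
          omega
        obtain ⟨V', hV', hz', hp'⟩ := IH (mu a') (lt_of_lt_of_le hmu hle) a' le_rfl
        refine ⟨E * V', ?_, ?_, ?_⟩
        · have hdE : unimod E := by
            rw [unimod, hE, Matrix.det_transvection_of_ne _ _ hj₀]
            exact Or.inl rfl
          exact hdE.mul hV'
        · intro j hj; rw [← Matrix.vecMul_vecMul, ← ha']; exact hz' j hj
        · rw [← Matrix.vecMul_vecMul, ← ha']; exact hp'



lemma unimod.det_ne_zero {n} {M : Matrix (Fin n) (Fin n) ℤ} (h : unimod M) : M.det ≠ 0 := by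
  rcases h with h|h <;> rw [h] <;> decide

/-- solving a triangular system to reduce a column -/
lemma triangularSolve : ∀ {n : ℕ} (T : Matrix (Fin n) (Fin n) ℤ),
    (∀ i j : Fin n, (i:ℕ) < (j:ℕ) → T i j = 0) → (∀ i, 0 < T i i) → ∀ (c : Fin n → ℤ),
    ∃ v : Fin n → ℤ, ∀ i, 0 ≤ c i + ∑ j, T i j * v j ∧ c i + ∑ j, T i j * v j < T i i := by
  intro n
  induction n with
  | zero => exact fun T _ _ c => ⟨0, fun i => i.elim0⟩
  | succ n IH =>
    intro T hlow hdiag c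
    set v0 : ℤ := -(c 0 / T 0 0) with hv0
    obtain ⟨v', hv'⟩ := IH (T.submatrix Fin.succ Fin.succ)
      (fun i j h => hlow i.succ j.succ (by simpa using h))
      (fun i => hdiag i.succ)
      (fun i => c i.succ + T i.succ 0 * v0)
    refine ⟨Fin.cons v0 v', fun i => ?_⟩
    have hsum : ∀ i : Fin (n+1), ∑ j, T i j * (Fin.cons v0 v' : Fin (n+1) → ℤ) j
        = T i 0 * v0 + ∑ j : Fin n, T i j.succ * v' j := by
      intro i
      rw [Fin.sum_univ_succ]
      simp
    induction i using Fin.cases with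
    | zero =>
      have hz : ∀ j : Fin n, T 0 j.succ * v' j = 0 := by
        intro j
        rw [hlow 0 j.succ (by simp), zero_mul]
      rw [hsum, Finset.sum_congr rfl (fun j _ => hz j), Finset.sum_const_zero, add_zero]
      have hT := hdiag 0
      have : c 0 + T 0 0 * v0 = c 0 % T 0 0 := by
        rw [hv0, Int.emod_def]; ring
      rw [this]
      exact ⟨Int.emod_nonneg _ (ne_of_gt hT), Int.emod_lt_of_pos _ hT⟩
    | succ i =>
      have h := hv' i
      simp only [Matrix.submatrix_apply] at h
      rw [hsum]
      constructor
      · have := h.1; linarith [this]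
      · have := h.2; linarith [this]

/-- Hermite normal form, square case -/
def IsHNFsq {n : ℕ} (H : Matrix (Fin n) (Fin n) ℤ) : Prop :=
  (∀ i j : Fin n, (i:ℕ) < (j:ℕ) → H i j = 0) ∧ (∀ i, 0 < H i i) ∧
  (∀ i j : Fin n, (j:ℕ) < (i:ℕ) → 0 ≤ H i j ∧ H i j < H i i)

def lift1 {n : ℕ} (W : Matrix (Fin n) (Fin n) ℤ) : Matrix (Fin (n+1)) (Fin (n+1)) ℤ :=
  Matrix.of fun i j =>
    Fin.cases (Fin.cases 1 (fun _ => 0) j) (fun i' => Fin.cases 0 (fun j' => W i' j') j) i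

@[simp] lemma lift1_zero_zero {n} (W : Matrix (Fin n) (Fin n) ℤ) : lift1 W 0 0 = 1 := rfl
@[simp] lemma lift1_zero_succ {n} (W : Matrix (Fin n) (Fin n) ℤ) (j : Fin n) :
    lift1 W 0 j.succ = 0 := by simp [lift1]
@[simp] lemma lift1_succ_zero {n} (W : Matrix (Fin n) (Fin n) ℤ) (i : Fin n) :
    lift1 W i.succ 0 = 0 := by simp [lift1]
@[simp] lemma lift1_succ_succ {n} (W : Matrix (Fin n) (Fin n) ℤ) (i j : Fin n) :
    lift1 W i.succ j.succ = W i j := by simp [lift1]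

lemma submatrix_lift1 {n} (W : Matrix (Fin n) (Fin n) ℤ) :
    (lift1 W).submatrix Fin.succ Fin.succ = W := by
  ext i j; simp

lemma det_lift1 {n} (W : Matrix (Fin n) (Fin n) ℤ) : (lift1 W).det = W.det := by
  rw [Matrix.det_succ_row_zero, Finset.sum_eq_single 0]
  · rw [Fin.succAbove_zero, submatrix_lift1]
    simp
  · intro j _ hj
    rcases Fin.eq_zero_or_eq_succ j with rfl | ⟨j', rfl⟩
    · exact absurd rfl hj
    · simp
  · simp

lemma sqHNF : ∀ (n : ℕ) (M : Matrix (Fin n) (Fin n) ℤ), M.det ≠ 0 →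
    ∃ V, unimod V ∧ IsHNFsq (M * V) := by
  intro n
  induction n with
  | zero =>
    intro M _
    exact ⟨1, unimod.one, fun i => i.elim0, fun i => i.elim0, fun i => i.elim0⟩
  | succ n IH =>
    intro M hdet
    obtain ⟨V₁, hV₁u, hV₁z, hV₁p⟩ := rowReduce (M 0)
    set M₁ := M * V₁ with hM₁
    have hrow0 : ∀ j, M₁ 0 j = Matrix.vecMul (M 0) V₁ j := by
      intro j; simp [hM₁, Matrix.mul_apply, Matrix.vecMul, dotProduct]
    set g := Matrix.vecMul (M 0) V₁ 0 with hgdef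
    have hg0 : ∀ j, j ≠ 0 → M₁ 0 j = 0 := fun j hj => by rw [hrow0]; exact hV₁z j hj
    have hdet₁ : M₁.det ≠ 0 := by
      rw [hM₁, Matrix.det_mul]
      exact mul_ne_zero hdet hV₁u.det_ne_zero
    set M' := M₁.submatrix Fin.succ Fin.succ with hM'
    have hdetsplit : M₁.det = g * M'.det := by
      rw [Matrix.det_succ_row_zero, Finset.sum_eq_single 0]
      · rw [Fin.succAbove_zero, hrow0, ← hgdef, ← hM']
        simp
      · intro j _ hj
        rcases Fin.eq_zero_or_eq_succ j with rfl | ⟨j', rfl⟩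
        · exact absurd rfl hj
        · rw [hg0 j'.succ (Fin.succ_ne_zero j')]; ring
      · simp
    have hgne : g ≠ 0 := fun h => hdet₁ (by rw [hdetsplit, h, zero_mul])
    have hdet' : M'.det ≠ 0 := fun h => hdet₁ (by rw [hdetsplit, h, mul_zero])
    have hgpos : 0 < g := lt_of_le_of_ne hV₁p (Ne.symm hgne)
    obtain ⟨V', hV'u, hH'⟩ := IH M' hdet'
    set V₂ := lift1 V' with hV₂
    set M₂ := M₁ * V₂ with hM₂
    set H' := M' * V' with hH'def
    have hM₂00 : M₂ 0 0 = g := by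
      rw [hM₂, Matrix.mul_apply, Fin.sum_univ_succ]
      have : ∀ k : Fin n, M₁ 0 k.succ * V₂ k.succ 0 = 0 := by
        intro k; rw [hg0 k.succ (Fin.succ_ne_zero k), zero_mul]
      rw [Finset.sum_congr rfl (fun k _ => this k), Finset.sum_const_zero]
      rw [hrow0, ← hgdef]
      simp [hV₂]
    have hM₂0succ : ∀ j : Fin n, M₂ 0 j.succ = 0 := by
      intro j
      rw [hM₂, Matrix.mul_apply, Fin.sum_univ_succ]
      have : ∀ k : Fin n, M₁ 0 k.succ * V₂ k.succ j.succ = 0 := by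
        intro k; rw [hg0 k.succ (Fin.succ_ne_zero k), zero_mul]
      rw [Finset.sum_congr rfl (fun k _ => this k), Finset.sum_const_zero]
      simp [hV₂]
    have hM₂succ0 : ∀ i : Fin n, M₂ i.succ 0 = M₁ i.succ 0 := by
      intro i
      rw [hM₂, Matrix.mul_apply, Fin.sum_univ_succ]
      simp [hV₂]
    have hM₂succsucc : ∀ i j : Fin n, M₂ i.succ j.succ = H' i j := by
      intro i j
      rw [hM₂, Matrix.mul_apply, Fin.sum_univ_succ, hH'def, Matrix.mul_apply]
      simp [hV₂, hM']
    obtain ⟨v, hv⟩ := triangularSolve H' hH'.1 hH'.2.1 (fun i => M₁ i.succ 0)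
    set V₃ : Matrix (Fin (n+1)) (Fin (n+1)) ℤ :=
      Matrix.of (fun k l => if l = 0 then (Fin.cases 1 v k : ℤ) else if k = l then 1 else 0)
      with hV₃
    have hV₃u : unimod V₃ := by
      left
      rw [Matrix.det_succ_row_zero, Finset.sum_eq_single 0]
      · have : V₃.submatrix Fin.succ Fin.succ = 1 := by
          ext k l
          by_cases h : k = l <;>
            simp [hV₃, Matrix.one_apply, h, (Fin.succ_ne_zero l), Fin.succ_inj]
        rw [Fin.succAbove_zero, this]
        simp [hV₃]
      · intro j _ hj
        rcases Fin.eq_zero_or_eq_succ j with rfl | ⟨j', rfl⟩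
        · exact absurd rfl hj
        · simp [hV₃, (Fin.succ_ne_zero j').symm, Fin.succ_ne_zero j']
      · simp
    set M₃ := M₂ * V₃ with hM₃
    have hM₃col0 : ∀ i : Fin (n+1), M₃ i 0 = M₂ i 0 + ∑ k : Fin n, M₂ i k.succ * v k := by
      intro i
      rw [hM₃, Matrix.mul_apply, Fin.sum_univ_succ]
      have h1 : V₃ 0 0 = 1 := by simp [hV₃]
      have h2 : ∀ k : Fin n, V₃ k.succ 0 = v k := by intro k; simp [hV₃]
      rw [h1]
      simp only [h2, mul_one]
    have hM₃succcol : ∀ (i : Fin (n+1)) (l : Fin n), M₃ i l.succ = M₂ i l.succ := by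
      intro i l
      rw [hM₃, Matrix.mul_apply, Finset.sum_eq_single l.succ]
      · simp [hV₃, (Fin.succ_ne_zero l)]
      · intro k _ hk
        have : V₃ k l.succ = 0 := by simp [hV₃, Fin.succ_ne_zero l, hk]
        rw [this, mul_zero]
      · simp
    have hcol0 : ∀ i : Fin n, M₃ i.succ 0 = M₁ i.succ 0 + ∑ k, H' i k * v k := by
      intro i
      rw [hM₃col0, hM₂succ0]
      congr 1
      exact Finset.sum_congr rfl fun k _ => by rw [hM₂succsucc]
    refine ⟨V₁ * V₂ * V₃, (hV₁u.mul (by rw [unimod, hV₂, det_lift1]; exact hV'u)).mul hV₃u, ?_, ?_, ?_⟩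
    all_goals
      have hfold : M * (V₁ * V₂ * V₃) = M₃ := by
        rw [hM₃, hM₂, hM₁]; noncomm_ring
      rw [hfold]
    · -- upper zeros
      intro i j hij
      induction i using Fin.cases with
      | zero =>
        rcases Fin.eq_zero_or_eq_succ j with rfl | ⟨j', rfl⟩
        · simp at hij
        · rw [hM₃succcol, hM₂0succ]
      | succ i =>
        rcases Fin.eq_zero_or_eq_succ j with rfl | ⟨j', rfl⟩
        · simp at hij
        · rw [hM₃succcol, hM₂succsucc]
          exact hH'.1 i j' (by simpa using hij)
    · -- positive diagonal
      intro i
      induction i using Fin.cases with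
      | zero => rw [hM₃col0, hM₂00]
                have : ∀ k : Fin n, M₂ 0 k.succ * v k = 0 := by
                  intro k; rw [hM₂0succ, zero_mul]
                rw [Finset.sum_congr rfl (fun k _ => this k), Finset.sum_const_zero, add_zero]
                exact hgpos
      | succ i =>
        have hd : M₃ i.succ i.succ = H' i i := by rw [hM₃succcol, hM₂succsucc]
        rw [hd]
        exact hH'.2.1 i
    · -- lower entries reduced
      intro i j hji
      induction i using Fin.cases with
      | zero => simp at hji
      | succ i =>
        have hd : M₃ i.succ i.succ = H' i i := by rw [hM₃succcol, hM₂succsucc]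
        rcases Fin.eq_zero_or_eq_succ j with rfl | ⟨j', rfl⟩
        · rw [hcol0, hd]
          exact hv i
        · rw [hM₃succcol, hM₂succsucc, hd]
          exact hH'.2.2 i j' (by simpa using hji)



lemma det_abs_le_of_unitRows {q : ℕ} (N : Matrix (Fin q) (Fin q) ℤ) (s : Finset (Fin q))
    (m : ℤ) (hm : 0 ≤ m)
    (hunit : ∀ i ∈ s, ∃ j₀, ∀ j, N i j = if j = j₀ then 1 else 0)
    (hbound : ∀ i ∉ s, ∀ j, |N i j| ≤ m) :
    |N.det| ≤ (Nat.factorial sᶜ.card : ℤ) * m ^ (sᶜ.card) := by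
  classical
  set pc := sᶜ.card with hpc
  have h1 : N.det = ∑ σ : Equiv.Perm (Fin q), ((Equiv.Perm.sign σ : ℤˣ) : ℤ) * ∏ i, N i (σ i) := by
    rw [← Matrix.det_transpose N, Matrix.det_apply]
    exact Finset.sum_congr rfl fun σ _ => by
      rw [Units.smul_def, zsmul_eq_mul]
      congr 1
  have habs : |N.det| ≤ ∑ σ : Equiv.Perm (Fin q), ∏ i, |N i (σ i)| := by
    rw [h1]
    refine le_trans (Finset.abs_sum_le_sum_abs _ _) ?_
    refine Finset.sum_le_sum fun σ _ => ?_
    rw [abs_mul, Finset.abs_prod]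
    rcases Int.units_eq_one_or (Equiv.Perm.sign σ) with h | h <;> simp [h]
  set g' : Fin q → Fin q := fun i => if h : i ∈ s then (hunit i h).choose else i with hg'
  have hgspec : ∀ i ∈ s, ∀ j, N i j = if j = g' i then 1 else 0 := by
    intro i hi j
    rw [hg']
    simp only [dif_pos hi]
    exact (hunit i hi).choose_spec j
  set S : Finset (Equiv.Perm (Fin q)) :=
    Finset.univ.filter (fun σ => ∀ i ∈ s, σ i = g' i) with hS
  have hvanish : ∀ σ : Equiv.Perm (Fin q), σ ∉ S → ∏ i, |N i (σ i)| = 0 := by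
    intro σ hσ
    rw [hS, Finset.mem_filter] at hσ
    push_neg at hσ
    obtain ⟨i, hi, hne⟩ := hσ (Finset.mem_univ σ)
    refine Finset.prod_eq_zero (Finset.mem_univ i) ?_
    rw [hgspec i hi, if_neg hne, abs_zero]
  have hsum : ∑ σ : Equiv.Perm (Fin q), ∏ i, |N i (σ i)| = ∑ σ ∈ S, ∏ i, |N i (σ i)| :=
    (Finset.sum_subset (Finset.subset_univ S) (fun σ _ hσ => hvanish σ hσ)).symm
  have hterm : ∀ σ ∈ S, ∏ i, |N i (σ i)| ≤ m ^ pc := by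
    intro σ hσ
    rw [hS, Finset.mem_filter] at hσ
    rw [← Finset.prod_mul_prod_compl s]
    have hs1 : ∏ i ∈ s, |N i (σ i)| = 1 := by
      refine Finset.prod_eq_one fun i hi => ?_
      rw [hgspec i hi, if_pos (hσ.2 i hi), abs_one]
    rw [hs1, one_mul]
    calc ∏ i ∈ sᶜ, |N i (σ i)| ≤ ∏ _i ∈ sᶜ, m :=
          Finset.prod_le_prod (fun i _ => abs_nonneg _)
            (fun i hi => hbound i (Finset.mem_compl.mp hi) _)
      _ = m ^ pc := by rw [Finset.prod_const, hpc]
  have hcard : S.card ≤ Nat.factorial pc := by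
    by_cases hinj : Set.InjOn g' ↑s
    · have himgcard : (s.image g').card = s.card := Finset.card_image_of_injOn hinj
      have hcompl_card : Fintype.card ↥((s.image g')ᶜ : Finset (Fin q)) = pc := by
        rw [Fintype.card_coe, Finset.card_compl, himgcard, hpc, Finset.card_compl]
      have hsc_card : Fintype.card ↥(sᶜ : Finset (Fin q)) = pc := by
        rw [Fintype.card_coe]
      -- injection from S into embeddings
      have hmap : ∀ σ ∈ S, ∀ x : ↥(sᶜ : Finset (Fin q)), σ x.1 ∈ ((s.image g')ᶜ : Finset (Fin q)) := by
        intro σ hσ x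
        rw [hS, Finset.mem_filter] at hσ
        rw [Finset.mem_compl]
        intro hmem
        obtain ⟨i, hi, hgi⟩ := Finset.mem_image.mp hmem
        have : σ i = σ x.1 := by rw [hσ.2 i hi, hgi]
        have : i = x.1 := σ.injective this
        exact (Finset.mem_compl.mp x.2) (this ▸ hi)
      set F : {σ // σ ∈ S} → (↥(sᶜ : Finset (Fin q)) ↪ ↥((s.image g')ᶜ : Finset (Fin q))) :=
        fun σs => ⟨fun x => ⟨σs.1 x.1, hmap σs.1 σs.2 x⟩,
          fun x y hxy => Subtype.ext (σs.1.injective (congrArg Subtype.val hxy))⟩ with hF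
      have hFinj : Function.Injective F := by
        intro σs τs hFeq
        have hpt : ∀ x : ↥(sᶜ : Finset (Fin q)), σs.1 x.1 = τs.1 x.1 := by
          intro x
          exact congrArg Subtype.val (DFunLike.congr_fun hFeq x)
        have hσS := (Finset.mem_filter.mp σs.2).2
        have hτS := (Finset.mem_filter.mp τs.2).2
        apply Subtype.ext
        apply Equiv.ext
        intro i
        by_cases hi : i ∈ s
        · rw [hσS i hi, hτS i hi]
        · exact hpt ⟨i, Finset.mem_compl.mpr hi⟩
      have hle := Fintype.card_le_of_injective F hFinj
      rw [Fintype.card_coe] at hle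
      calc S.card ≤ Fintype.card (↥(sᶜ : Finset (Fin q)) ↪ ↥((s.image g')ᶜ : Finset (Fin q))) := hle
        _ = Nat.factorial pc := by
            rw [Fintype.card_embedding_eq, hcompl_card, hsc_card, Nat.descFactorial_self]
    · have : S = ∅ := by
        rw [Finset.eq_empty_iff_forall_notMem]
        intro σ hσ
        rw [hS, Finset.mem_filter] at hσ
        apply hinj
        intro x hx y hy hxy
        exact σ.injective (by rw [hσ.2 x hx, hσ.2 y hy, hxy])
      rw [this, Finset.card_empty]
      exact Nat.zero_le _
  calc |N.det| ≤ ∑ σ ∈ S, ∏ i, |N i (σ i)| := by rw [← hsum]; exact habs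
    _ ≤ S.card • m ^ pc := Finset.sum_le_card_nsmul _ _ _ hterm
    _ = (S.card : ℤ) * m ^ pc := nsmul_eq_mul _ _
    _ ≤ (Nat.factorial pc : ℤ) * m ^ pc := by
        have := hcard
        have hmp : (0:ℤ) ≤ m ^ pc := pow_nonneg hm _
        exact mul_le_mul_of_nonneg_right (by exact_mod_cast hcard) hmp



lemma exists_good_columns {p q : ℕ} (A : Matrix (Fin p) (Fin q) ℤ)
    (hrank : LinearIndependent ℝ (fun i : Fin p => fun j => (A i j : ℝ))) :
    ∃ g : Fin p → Fin q, Function.Injective g ∧ (A.submatrix id g).det ≠ 0 := by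
  classical
  set Aℝ : Matrix (Fin p) (Fin q) ℝ := Matrix.of (fun i j => (A i j : ℝ)) with hAR
  set cols : Fin q → (Fin p → ℝ) := fun j i => Aℝ i j with hcols
  have hrows : LinearIndependent ℝ (fun i : Fin p => Aℝ i) := hrank
  -- rank computations
  have h1 : Aℝ.rank = Module.finrank ℝ (Submodule.span ℝ (Set.range cols)) := by
    have := Matrix.rank_eq_finrank_span_cols Aℝ
    exact this
  have h2 : Aℝᵀ.rank = Module.finrank ℝ (Submodule.span ℝ (Set.range (fun i : Fin p => Aℝ i))) := by
    have := Matrix.rank_eq_finrank_span_cols Aℝᵀ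
    exact this
  have h3 : Module.finrank ℝ (Submodule.span ℝ (Set.range (fun i : Fin p => Aℝ i))) = p := by
    rw [finrank_span_eq_card hrows, Fintype.card_fin]
  have hspan_top : Submodule.span ℝ (Set.range cols) = ⊤ := by
    apply Submodule.eq_top_of_finrank_eq
    rw [← h1, ← Matrix.rank_transpose, h2, h3, Module.finrank_fintype_fun_eq_card,
      Fintype.card_fin]
  obtain ⟨b, hbsub, hbspan, hbli⟩ := exists_linearIndependent ℝ (Set.range cols)
  have hbspan_top : Submodule.span ℝ b = ⊤ := by rw [hbspan, hspan_top]
  have hBtop : ⊤ ≤ Submodule.span ℝ (Set.range (Subtype.val : b → (Fin p → ℝ))) := by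
    rw [Subtype.range_coe, hbspan_top]
  let B : Module.Basis b ℝ (Fin p → ℝ) := Module.Basis.mk hbli hBtop
  haveI : Fintype b := FiniteDimensional.fintypeBasisIndex B
  have hcardb : Fintype.card b = p := by
    have := Module.finrank_eq_card_basis B
    rw [Module.finrank_fintype_fun_eq_card, Fintype.card_fin] at this
    omega
  let eb : Fin p ≃ b := (Fintype.equivOfCardEq (by rw [hcardb, Fintype.card_fin])).symm
  let gsub : b → Fin q := fun x => Classical.choose (hbsub x.2)
  have hchoose : ∀ x : b, cols (gsub x) = (x : Fin p → ℝ) :=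
    fun x => Classical.choose_spec (hbsub x.2)
  have hgsubinj : Function.Injective gsub := by
    intro x y hxy
    apply Subtype.ext
    rw [← hchoose x, ← hchoose y, hxy]
  set g : Fin p → Fin q := gsub ∘ (⇑eb) with hg
  have hginj : Function.Injective g := hgsubinj.comp eb.injective
  have hfam : (fun k : Fin p => cols (g k)) = (Subtype.val : b → _) ∘ eb := by
    funext k
    simp only [hg, Function.comp_apply]
    exact hchoose (eb k)
  have hli2 : LinearIndependent ℝ (fun k : Fin p => cols (g k)) := by
    rw [hfam]
    exact hbli.comp eb eb.injective
  -- determinant over ℝ nonzero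
  have hdetR : (Aℝ.submatrix id g).det ≠ 0 := by
    intro h0
    obtain ⟨v, hv0, hvz⟩ := (Matrix.exists_mulVec_eq_zero_iff).mpr h0
    have : ∀ k, v k = 0 := by
      apply Fintype.linearIndependent_iff.mp hli2 v
      funext i
      have := congrFun hvz i
      simp only [Matrix.mulVec, dotProduct, Matrix.submatrix_apply, id_eq,
        Pi.zero_apply] at this
      simp only [Finset.sum_apply, Pi.smul_apply, Pi.zero_apply, smul_eq_mul]
      rw [← this]
      exact Finset.sum_congr rfl fun k _ => mul_comm _ _
    exact hv0 (funext this)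
  refine ⟨g, hginj, fun h0 => hdetR ?_⟩
  have hmap : Aℝ.submatrix id g = (Int.castRingHom ℝ).mapMatrix (A.submatrix id g) := by
    ext i j
    simp [hAR]
  rw [hmap, ← RingHom.map_det, h0]
  simp

lemma exists_perm_extend {p q : ℕ} (hpq : p ≤ q) (g : Fin p → Fin q)
    (hg : Function.Injective g) :
    ∃ σ : Equiv.Perm (Fin q), ∀ k : Fin p, σ (Fin.castLE hpq k) = g k := by
  classical
  have hcle : Function.Injective (Fin.castLE hpq) := Fin.castLE_injective hpq
  have hcard : Fintype.card ↥(Set.range (Fin.castLE hpq))ᶜ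
      = Fintype.card ↥(Set.range g)ᶜ := by
    rw [Fintype.card_compl_set, Fintype.card_compl_set,
      Set.card_range_of_injective hcle, Set.card_range_of_injective hg]
  let eL : ↥(Set.range (Fin.castLE hpq)) ≃ ↥(Set.range g) :=
    (Equiv.ofInjective _ hcle).symm.trans (Equiv.ofInjective g hg)
  let eR : ↥(Set.range (Fin.castLE hpq))ᶜ ≃ ↥(Set.range g)ᶜ := Fintype.equivOfCardEq hcard
  refine ⟨(Equiv.Set.sumCompl (Set.range (Fin.castLE hpq))).symm.trans
    ((eL.sumCongr eR).trans (Equiv.Set.sumCompl (Set.range g))), fun k => ?_⟩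
  have hmem : Fin.castLE hpq k ∈ Set.range (Fin.castLE hpq) := ⟨k, rfl⟩
  simp only [Equiv.trans_apply, Equiv.Set.sumCompl_symm_apply_of_mem hmem,
    Equiv.sumCongr_apply, Sum.map_inl]
  have : eL ⟨Fin.castLE hpq k, hmem⟩ = ⟨g k, ⟨k, rfl⟩⟩ := by
    simp only [eL, Equiv.trans_apply]
    have h1 : (Equiv.ofInjective _ hcle).symm ⟨Fin.castLE hpq k, hmem⟩ = k :=
      Equiv.ofInjective_symm_apply hcle k
    rw [h1, Equiv.ofInjective_apply]
  rw [this, Equiv.Set.sumCompl_apply_inl]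


end HNFAux

open HNFAux

/-- Any rank-`p` integer `p × q` matrix with entries of absolute value `< M₀` admits a
unimodular `U` with `AU` in Hermite normal form and `|U_{ij}| ≤ p! q M₀^p`. -/
theorem exists_unimodular_hnf_bounded {p q : ℕ}
    (A : Matrix (Fin p) (Fin q) ℤ)
    (hrank : LinearIndependent ℝ (fun i : Fin p => fun j => (A i j : ℝ)))
    (M₀ : ℤ) (hM₀ : ∀ i j, |A i j| < M₀) :
    ∃ U : Matrix (Fin q) (Fin q) ℤ,
      (U.det = 1 ∨ U.det = -1) ∧
      IsHermiteNormalForm (A * U) ∧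
      ∀ i j, |U i j| ≤ (p.factorial : ℤ) * q * M₀ ^ p := by
  classical
  rcases Nat.eq_zero_or_pos p with hp0 | hppos
  · subst hp0
    refine ⟨1, Or.inl Matrix.det_one, ⟨fun i => i.elim0, fun i => i.elim0, fun i => i.elim0⟩,
      fun i j => ?_⟩
    have hq : 0 < q := i.pos
    have h1 : |(1 : Matrix (Fin q) (Fin q) ℤ) i j| ≤ 1 := by
      rw [Matrix.one_apply]
      split <;> simp
    have : (1:ℤ) ≤ (q:ℤ) := by exact_mod_cast hq
    simpa using le_trans h1 (by simpa using this)
  · -- p ≥ 1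
    have hpq : p ≤ q := by
      have := hrank.fintype_card_le_finrank
      rwa [Module.finrank_fintype_fun_eq_card, Fintype.card_fin, Fintype.card_fin] at this
    have i0 : Fin p := ⟨0, hppos⟩
    have hM1 : 1 ≤ M₀ := by
      have := hM₀ i0 ⟨0, lt_of_lt_of_le hppos hpq⟩
      have := abs_nonneg (A i0 ⟨0, lt_of_lt_of_le hppos hpq⟩)
      omega
    have hM2 : 2 ≤ M₀ := by
      have hne := hrank.ne_zero i0
      have : ∃ j, A i0 j ≠ 0 := by
        by_contra hall
        push_neg at hall
        exact hne (funext fun j => by rw [hall j]; exact Int.cast_zero)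
      obtain ⟨j1, hj1⟩ := this
      have h1 : 1 ≤ |A i0 j1| := by
        rcases abs_cases (A i0 j1) with ⟨h,_⟩|⟨h,_⟩ <;> omega
      have := hM₀ i0 j1
      omega
    have hMA : ∀ i j, |A i j| ≤ M₀ - 1 := fun i j => by have := hM₀ i j; omega
    obtain ⟨g, hginj, hgdet⟩ := exists_good_columns A hrank
    obtain ⟨σ, hσ⟩ := exists_perm_extend hpq g hginj
    set Abar : Matrix (Fin q) (Fin q) ℤ :=
      Matrix.of (fun i j => if h : (i:ℕ) < p then A ⟨i, h⟩ j else if j = σ i then 1 else 0)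
      with hAbar
    have hAbar_top : ∀ (i : Fin q) (h : (i:ℕ) < p) (j : Fin q), Abar i j = A ⟨i, h⟩ j := by
      intro i h j; simp [hAbar, h]
    have hAbar_bot : ∀ (i : Fin q), ¬((i:ℕ) < p) → ∀ j, Abar i j = if j = σ i then 1 else 0 := by
      intro i h j; simp [hAbar, h]
    have hAbar_castLE : ∀ (i : Fin p) (j : Fin q), Abar (Fin.castLE hpq i) j = A i j := by
      intro i j
      have h := hAbar_top (Fin.castLE hpq i) (by simpa using i.2) j
      simpa [Fin.eta] using h
    -- determinant of Abar is nonzero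
    have hdbar : Abar.det ≠ 0 := by
      intro h0
      set N : Matrix (Fin q) (Fin q) ℚ := (Int.castRingHom ℚ).mapMatrix Abar with hN
      have hNdet : N.det = 0 := by
        rw [hN, ← RingHom.map_det, h0]; simp
      obtain ⟨v, hv0, hvz⟩ := Matrix.exists_mulVec_eq_zero_iff.mpr hNdet
      have hrow : ∀ i : Fin q, ∑ j, N i j * v j = 0 := by
        intro i
        have := congrFun hvz i
        simpa [Matrix.mulVec, dotProduct] using this
      have hbotzero : ∀ i : Fin q, ¬((i:ℕ) < p) → v (σ i) = 0 := by
        intro i hi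
        have h := hrow i
        rw [Finset.sum_eq_single (σ i)] at h
        · simpa [hN, hAbar_bot i hi] using h
        · intro j _ hj
          have : N i j = 0 := by simp [hN, hAbar_bot i hi, hj]
          rw [this, zero_mul]
        · simp
      have hoff : ∀ j : Fin q, j ∉ Set.range g → v j = 0 := by
        intro j hj
        have hnotlt : ¬(((σ.symm j) : Fin q) : ℕ) < p := by
          intro hlt
          apply hj
          refine ⟨⟨((σ.symm j : Fin q) : ℕ), hlt⟩, ?_⟩
          rw [← hσ ⟨((σ.symm j : Fin q) : ℕ), hlt⟩]
          have hc : Fin.castLE hpq ⟨((σ.symm j : Fin q) : ℕ), hlt⟩ = σ.symm j :=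
            Fin.ext rfl
          rw [hc, Equiv.apply_symm_apply]
        have := hbotzero (σ.symm j) hnotlt
        rwa [Equiv.apply_symm_apply] at this
      set w : Fin p → ℚ := fun k => v (g k) with hw
      have hsubdet : ((Int.castRingHom ℚ).mapMatrix (A.submatrix id g)).det ≠ 0 := by
        rw [← RingHom.map_det]
        simpa using hgdet
      have hwz : (((Int.castRingHom ℚ).mapMatrix (A.submatrix id g))) *ᵥ w = 0 := by
        funext i
        have hr := hrow (Fin.castLE hpq i)
        have hsplit : ∑ j, N (Fin.castLE hpq i) j * v j
            = ∑ k : Fin p, N (Fin.castLE hpq i) (g k) * v (g k) := by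
          have himg : ∑ j ∈ Finset.univ.image g, N (Fin.castLE hpq i) j * v j
              = ∑ k : Fin p, N (Fin.castLE hpq i) (g k) * v (g k) :=
            Finset.sum_image (fun x _ y _ h => hginj h)
          have hsub : ∑ j ∈ Finset.univ.image g, N (Fin.castLE hpq i) j * v j
              = ∑ j, N (Fin.castLE hpq i) j * v j := by
            refine Finset.sum_subset (Finset.subset_univ _) ?_
            intro j _ hjnot
            have hnr : j ∉ Set.range g := by
              rintro ⟨k, hk⟩
              exact hjnot (Finset.mem_image.mpr ⟨k, Finset.mem_univ k, hk⟩)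
            rw [hoff j hnr, mul_zero]
          rw [← hsub, himg]
        rw [hsplit] at hr
        simp only [Matrix.mulVec, dotProduct, Pi.zero_apply]
        rw [← hr]
        refine Finset.sum_congr rfl fun k _ => ?_
        congr 1
        simp [hN, RingHom.mapMatrix_apply, Matrix.map_apply, hAbar_castLE]
      have hwzero : w = 0 := by
        by_contra hwne
        exact hsubdet (Matrix.exists_mulVec_eq_zero_iff.mp ⟨w, hwne, hwz⟩)
      apply hv0
      funext j
      by_cases hjr : j ∈ Set.range g
      · obtain ⟨k, rfl⟩ := hjr
        exact congrFun hwzero k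
      · exact hoff j hjr
    obtain ⟨V, hVu, hH⟩ := sqHNF q Abar hdbar
    set H := Abar * V with hHdef
    set d := Abar.det with hd
    -- A * V is the top p rows of H
    have htop : ∀ (i : Fin p) (j : Fin q), (A * V) i j = H (Fin.castLE hpq i) j := by
      intro i j
      rw [Matrix.mul_apply, hHdef, Matrix.mul_apply]
      exact Finset.sum_congr rfl fun k _ => by rw [hAbar_castLE]
    have hHNF : IsHermiteNormalForm (A * V) := by
      refine ⟨?_, ?_, ?_⟩
      · intro i j hij
        rw [htop]
        exact hH.1 _ j (by simpa using hij)
      · intro i h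
        rw [htop]
        have hcast : (⟨(i:ℕ), h⟩ : Fin q) = Fin.castLE hpq i := by
          apply Fin.ext; simp
        rw [hcast]
        exact hH.2.1 _
      · intro i h j hji
        rw [htop, htop]
        have hcast : (⟨(i:ℕ), h⟩ : Fin q) = Fin.castLE hpq i := by
          apply Fin.ext; simp
        rw [hcast]
        exact hH.2.2 _ j (by simpa using hji)
    -- bounds
    have hHlow : ∀ i j : Fin q, (i:ℕ) < (j:ℕ) → H i j = 0 := hH.1
    have hHdiag : ∀ i, 0 < H i i := hH.2.1
    have hdetH : H.det = ∏ k, H k k := by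
      apply Matrix.det_of_lowerTriangular
      intro i j hij
      exact hHlow i j hij
    have hprod_eq : ∏ k, H k k = |d| := by
      have h1 : H.det = d * V.det := by rw [hHdef, Matrix.det_mul, hd]
      have hpos : 0 < ∏ k, H k k := Finset.prod_pos fun k _ => hHdiag k
      rw [hdetH] at h1
      rcases hVu with h | h <;> rw [h] at h1 <;> simp only [mul_one, mul_neg_one] at h1 <;>
        rcases abs_cases d with ⟨hc,_⟩|⟨hc,_⟩ <;> omega
    have habs_pos : 0 < |d| := abs_pos.mpr hdbar
    have hHkk_le : ∀ k, H k k ≤ |d| := by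
      intro k
      rw [← hprod_eq]
      have hme := Finset.mul_prod_erase Finset.univ (fun l => H l l) (Finset.mem_univ k)
      have herase : (1:ℤ) ≤ ∏ l ∈ Finset.univ.erase k, H l l := by
        refine Finset.prod_induction _ (fun x => (1:ℤ) ≤ x) (fun a b ha hb => ?_) le_rfl
          (fun l _ => by have := hHdiag l; omega)
        nlinarith
      have hk := hHdiag k
      nlinarith [hme]
    have hHentry : ∀ k j : Fin q, 0 ≤ H k j ∧ H k j ≤ |d| := by
      intro k j
      rcases lt_trichotomy ((j:ℕ)) ((k:ℕ)) with hlt | heq | hgt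
      · have := hH.2.2 k j hlt
        exact ⟨this.1, le_trans (le_of_lt this.2) (hHkk_le k)⟩
      · have hjk : j = k := Fin.ext heq
        subst hjk
        exact ⟨le_of_lt (hHdiag j), hHkk_le j⟩
      · rw [hHlow k j hgt]
        exact ⟨le_refl 0, le_of_lt habs_pos⟩
    have hfiltcard : (Finset.univ.filter (fun r : Fin q => (r:ℕ) < p)).card = p := by
      have himg : Finset.univ.filter (fun r : Fin q => (r:ℕ) < p)
          = Finset.image (Fin.castLE hpq) Finset.univ := by
        ext r
        simp only [Finset.mem_filter, Finset.mem_univ, true_and, Finset.mem_image]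
        constructor
        · intro hr
          exact ⟨⟨r, hr⟩, Fin.ext rfl⟩
        · rintro ⟨k, _, rfl⟩
          simpa using k.2
      rw [himg, Finset.card_image_of_injective _ (Fin.castLE_injective hpq),
        Finset.card_univ, Fintype.card_fin]
    have hadj : ∀ i k : Fin q, |Abar.adjugate i k| ≤ (p.factorial : ℤ) * (M₀ - 1)^p := by
      intro i k
      rw [Matrix.adjugate_apply]
      set s : Finset (Fin q) := (Finset.univ.filter (fun r : Fin q => ¬((r:ℕ) < p))) ∪ {k}
        with hs
      have hb := det_abs_le_of_unitRows (Abar.updateRow k (Pi.single i 1)) s (M₀ - 1)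
        (by omega) ?hunit ?hbound
      case hunit =>
        intro r hr
        by_cases hrk : r = k
        · subst hrk
          refine ⟨i, fun j => ?_⟩
          rw [Matrix.updateRow_self]
          simp [Pi.single_apply]
        · have hrs : ¬((r:ℕ) < p) := by
            rcases Finset.mem_union.mp hr with h | h
            · exact (Finset.mem_filter.mp h).2
            · exact absurd (Finset.mem_singleton.mp h) hrk
          refine ⟨σ r, fun j => ?_⟩
          rw [Matrix.updateRow_ne hrk, hAbar_bot r hrs]
      case hbound =>
        intro r hr j
        have hrk : r ≠ k := fun h =>
          hr (by rw [h]; exact Finset.mem_union_right _ (Finset.mem_singleton_self k))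
        have hrp : (r:ℕ) < p := by
          by_contra hc
          exact hr (Finset.mem_union_left _ (Finset.mem_filter.mpr ⟨Finset.mem_univ r, hc⟩))
        rw [Matrix.updateRow_ne hrk, hAbar_top r hrp]
        exact hMA _ _
      refine le_trans hb ?_
      have hsub : sᶜ ⊆ Finset.univ.filter (fun r : Fin q => (r:ℕ) < p) := by
        intro r hr
        rw [Finset.mem_compl, hs, Finset.mem_union] at hr
        push_neg at hr
        refine Finset.mem_filter.mpr ⟨Finset.mem_univ r, ?_⟩
        have h1 := hr.1
        by_contra hc
        exact h1 (Finset.mem_filter.mpr ⟨Finset.mem_univ r, by omega⟩)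
      have hcard : sᶜ.card ≤ p := by
        have := Finset.card_le_card hsub
        rwa [hfiltcard] at this
      have hm1 : (1:ℤ) ≤ M₀ - 1 := by omega
      calc ((sᶜ.card).factorial : ℤ) * (M₀-1)^(sᶜ.card)
          ≤ (p.factorial : ℤ) * (M₀-1)^(sᶜ.card) := by
            have hf := Nat.factorial_le hcard
            exact mul_le_mul_of_nonneg_right (by exact_mod_cast hf) (pow_nonneg (by omega) _)
        _ ≤ (p.factorial : ℤ) * (M₀-1)^p := by
            refine mul_le_mul_of_nonneg_left ?_ (by positivity)
            exact pow_le_pow_right₀ hm1 hcard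
    have hkey : Abar.adjugate * H = d • V := by
      rw [hHdef, ← Matrix.mul_assoc, Matrix.adjugate_mul, ← hd, Matrix.smul_mul,
        Matrix.one_mul]
    have hVbound : ∀ i j, |V i j| ≤ (q:ℤ) * ((p.factorial:ℤ) * (M₀-1)^p) := by
      intro i j
      have h1 : |d| * |V i j| = |(Abar.adjugate * H) i j| := by
        rw [hkey, Matrix.smul_apply, smul_eq_mul, abs_mul]
      have h2 : |(Abar.adjugate * H) i j| ≤ ∑ k, |Abar.adjugate i k| * H k j := by
        rw [Matrix.mul_apply]
        refine le_trans (Finset.abs_sum_le_sum_abs _ _) (Finset.sum_le_sum fun k _ => ?_)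
        rw [abs_mul, abs_of_nonneg (hHentry k j).1]
      have h3 : ∑ k, |Abar.adjugate i k| * H k j
          ≤ ∑ _k : Fin q, ((p.factorial:ℤ) * (M₀-1)^p) * |d| := by
        refine Finset.sum_le_sum fun k _ => ?_
        exact mul_le_mul (hadj i k) (hHentry k j).2 (hHentry k j).1
          (mul_nonneg (by positivity) (pow_nonneg (by omega) _))
      rw [Finset.sum_const, Finset.card_univ, Fintype.card_fin, nsmul_eq_mul] at h3
      have h4 : |d| * |V i j| ≤ (q:ℤ) * (((p.factorial:ℤ) * (M₀-1)^p) * |d|) :=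
        le_trans (le_of_eq h1) (le_trans h2 h3)
      rw [show (q:ℤ) * (((p.factorial:ℤ)*(M₀-1)^p)*|d|)
        = |d| * ((q:ℤ)*((p.factorial:ℤ)*(M₀-1)^p)) from by ring] at h4
      exact le_of_mul_le_mul_left h4 habs_pos
    refine ⟨V, hVu, hHNF, fun i j => ?_⟩
    have h6 := hVbound i j
    have h7 : (M₀-1)^p ≤ M₀^p := pow_le_pow_left₀ (by omega) (by omega) p
    calc |V i j| ≤ (q:ℤ) * ((p.factorial:ℤ) * (M₀-1)^p) := h6
      _ = (p.factorial:ℤ) * q * (M₀-1)^p := by ring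
      _ ≤ (p.factorial:ℤ) * q * M₀^p := by
          refine mul_le_mul_of_nonneg_left h7 (by positivity)
end

section
/- For fixed integers d > m ≥ 1, the sum ∑_{D=1}^n |p_{nD} - D^{-(d-m+1)}| tends to 0 as n → ∞, where p_{nD} = |Λ_D ∩ B_n| / n^d, Λ_D is a sublattice of Z^d of index D^{d-m+1} containing D·Z^d, and B_n is any integer box of side n. -/
open Finset

-- difference of floor divisions
lemma ediv_diff_bounds (D : ℕ) (hD : 1 ≤ D) (c : ℤ) (n : ℕ) :
    (n : ℤ) / D ≤ (c + n) / D - c / D ∧ (c + n) / D - c / D ≤ (n : ℤ) / D + 1 := by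
  have hD' : (0:ℤ) < D := by exact_mod_cast hD
  have hne : (D:ℤ) ≠ 0 := hD'.ne'
  have h1 : c + (n:ℤ) = (c % D + n) + (c / D) * D := by
    have := Int.emod_add_mul_ediv c D
    linarith
  have h2 : (c + (n:ℤ)) / D = (c % D + n) / D + c / D := by
    rw [h1, Int.add_mul_ediv_right _ _ hne]
  have hm0 : 0 ≤ c % D := Int.emod_nonneg c hne
  have hmD : c % D < D := Int.emod_lt_of_pos c hD'
  constructor
  · rw [h2]
    have : (n:ℤ) / D ≤ (c % D + n) / D := by
      apply Int.ediv_le_ediv hD'; omega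
    omega
  · rw [h2]
    have : (c % D + n) / D ≤ ((n:ℤ) + (D - 1)) / D := by
      apply Int.ediv_le_ediv hD'; omega
    have h3 : ((n:ℤ) + (D - 1)) / D = ((n:ℤ) - 1) / D + 1 := by
      have : (n:ℤ) + (D-1) = ((n:ℤ) - 1) + 1 * D := by ring
      rw [this, Int.add_mul_ediv_right _ _ hne]
    have h4 : ((n:ℤ) - 1) / D ≤ (n:ℤ) / D := by
      apply Int.ediv_le_ediv hD'; omega
    omega

-- count of residues in an interval
lemma residue_count (D : ℕ) (hD : 1 ≤ D) (b : ℤ) (n : ℕ) (s : ZMod D) :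
    n / D ≤ ((Finset.Ico b (b + n)).filter (fun x : ℤ => (x : ZMod D) = s)).card ∧
    ((Finset.Ico b (b + n)).filter (fun x : ℤ => (x : ZMod D) = s)).card ≤ n / D + 1 := by
  haveI : NeZero D := ⟨by omega⟩
  have hD' : (0:ℤ) < D := by exact_mod_cast hD
  have hne : (D:ℤ) ≠ 0 := hD'.ne'
  set t : ℤ := (s.val : ℤ) with ht
  have hts : ((t : ℤ) : ZMod D) = s := by
    simp [ht, ZMod.natCast_val, ZMod.intCast_cast]
  set k₀ : ℤ := (b - t - 1) / D + 1
  set k₁ : ℤ := (b + n - t - 1) / D + 1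
  have himg : (Finset.Ico b (b + n)).filter (fun x : ℤ => (x : ZMod D) = s)
      = (Finset.Ico k₀ k₁).image (fun k => t + k * D) := by
    ext x
    simp only [Finset.mem_filter, Finset.mem_Ico, Finset.mem_image]
    constructor
    · rintro ⟨⟨h1, h2⟩, h3⟩
      have hdvd : (D:ℤ) ∣ x - t := by
        have : ((x - t : ℤ) : ZMod D) = 0 := by push_cast [hts, h3]; ring
        exact (ZMod.intCast_zmod_eq_zero_iff_dvd _ _).mp this
      obtain ⟨k, hk⟩ := hdvd
      rw [mul_comm] at hk
      refine ⟨k, ⟨?_, ?_⟩, by omega⟩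
      · -- k₀ ≤ k ↔ (b-t-1)/D < k ↔ b-t-1 < k*D
        have : b - t - 1 < k * D := by omega
        have := (Int.ediv_lt_iff_lt_mul hD').mpr this
        omega
      · -- k < k₁ ↔ k ≤ (b+n-t-1)/D ↔ k*D ≤ b+n-t-1
        have : k * D ≤ b + n - t - 1 := by omega
        have := (Int.le_ediv_iff_mul_le hD').mpr this
        omega
    · rintro ⟨k, ⟨hk0, hk1⟩, rfl⟩
      have h1 : b - t - 1 < k * D := (Int.ediv_lt_iff_lt_mul hD').mp (by omega)
      have h2 : k * D ≤ b + n - t - 1 := (Int.le_ediv_iff_mul_le hD').mp (by omega)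
      refine ⟨⟨by omega, by omega⟩, ?_⟩
      push_cast [hts]
      simp
  have hinj : Function.Injective (fun k : ℤ => t + k * D) := by
    intro a b hab
    simp only at hab
    exact mul_right_cancel₀ hne (by omega)
  have hcard : ((Finset.Ico b (b + n)).filter (fun x : ℤ => (x : ZMod D) = s)).card
      = (k₁ - k₀).toNat := by
    rw [himg, Finset.card_image_of_injective _ hinj, Int.card_Ico]
  have hk : k₁ - k₀ = (b - t - 1 + n) / D - (b - t - 1) / D := by
    simp only [k₀, k₁]
    ring_nf
  obtain ⟨hlo, hhi⟩ := ediv_diff_bounds D hD (b - t - 1) n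
  have hnd : ((n / D : ℕ) : ℤ) = (n : ℤ) / D := Int.natCast_ediv n D
  constructor
  · rw [hcard]
    have h5 : ((n / D : ℕ) : ℤ) ≤ k₁ - k₀ := by rw [hk, hnd]; exact hlo
    have h6 : (0:ℤ) ≤ k₁ - k₀ := le_trans (by positivity) h5
    exact (Int.le_toNat h6).mpr h5
  · rw [hcard]
    rw [Int.toNat_le, hk]
    push_cast [hnd]
    exact hhi

open scoped Classical in
lemma pi_filter_card {d : ℕ} (F : Fin d → Finset ℤ) (p : Fin d → ℤ → Prop) :
    ((Fintype.piFinset F).filter (fun x => ∀ i, p i (x i))).card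
      = ∏ i, ((F i).filter (p i)).card := by
  rw [← Fintype.card_piFinset]
  congr 1
  ext x
  simp only [Finset.mem_filter, Fintype.mem_piFinset]
  constructor
  · rintro ⟨h1, h2⟩ i; exact ⟨h1 i, h2 i⟩
  · intro h; exact ⟨fun i => (h i).1, fun i => (h i).2⟩

open scoped Classical in
lemma box_count (d m D n : ℕ) (hm : 1 ≤ m) (hmd : m < d) (hD : 1 ≤ D)
    (Λ : AddSubgroup (Fin d → ℤ)) (hindex : Λ.index = D ^ (d - m + 1))
    (hsub : ∀ x : Fin d → ℤ, (∀ i, (D : ℤ) ∣ x i) → x ∈ Λ) (bb : Fin d → ℤ) :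
    D ^ (m - 1) * (n / D) ^ d
      ≤ ((Fintype.piFinset (fun i => Finset.Ico (bb i) (bb i + n))).filter (· ∈ Λ)).card ∧
    ((Fintype.piFinset (fun i => Finset.Ico (bb i) (bb i + n))).filter (· ∈ Λ)).card
      ≤ D ^ (m - 1) * (n / D + 1) ^ d := by
  haveI : NeZero D := ⟨by omega⟩
  set φ : (Fin d → ℤ) →+ (Fin d → ZMod D) :=
    (AddMonoidHom.compLeft (Int.castAddHom (ZMod D)) (Fin d)) with hφ
  have hφapp : ∀ (x : Fin d → ℤ) (i : Fin d), φ x i = ((x i : ℤ) : ZMod D) := by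
    intro x i; rfl
  have hsurj : Function.Surjective φ := by
    intro y
    refine ⟨fun i => ((y i).val : ℤ), funext fun i => ?_⟩
    rw [hφapp]
    simp [ZMod.natCast_val, ZMod.intCast_cast]
  set S := Λ.map φ with hS
  have hmem : ∀ x, x ∈ Λ ↔ φ x ∈ S := by
    intro x
    constructor
    · intro hx; exact ⟨x, hx, rfl⟩
    · rintro ⟨y, hy, hxy⟩
      have hdiff : x - y ∈ Λ := by
        apply hsub
        intro i
        have : ((x i - y i : ℤ) : ZMod D) = 0 := by
          have : φ y i = φ x i := by rw [hxy]
          rw [hφapp, hφapp] at this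
          push_cast
          rw [this]; ring
        exact (ZMod.intCast_zmod_eq_zero_iff_dvd _ _).mp this
      have := add_mem hdiff hy
      simpa using this
  have hcomap : S.comap φ = Λ := by
    ext x; simp [AddSubgroup.mem_comap, hmem x]
  have hSindex : S.index = D ^ (d - m + 1) := by
    rw [← AddSubgroup.index_comap_of_surjective S hsurj, hcomap, hindex]
  have hcardG : Nat.card (Fin d → ZMod D) = D ^ d := by
    rw [Nat.card_eq_fintype_card, Fintype.card_fun, ZMod.card, Fintype.card_fin]
  have hScard : Nat.card S = D ^ (m - 1) := by
    have h1 := AddSubgroup.card_mul_index S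
    rw [hSindex, hcardG] at h1
    have h2 : D ^ (m - 1) * D ^ (d - m + 1) = D ^ d := by
      rw [← pow_add]; congr 1; omega
    have hpos : 0 < D ^ (d - m + 1) := Nat.pow_pos hD
    exact Nat.eq_of_mul_eq_mul_right hpos (by rw [h1, h2])
  set B := Fintype.piFinset (fun i => Finset.Ico (bb i) (bb i + n)) with hB
  set Sfin : Finset (Fin d → ZMod D) := Finset.univ.filter (· ∈ S) with hSfin
  have hSfincard : Sfin.card = D ^ (m - 1) := by
    rw [hSfin, ← Fintype.card_subtype, ← Nat.card_eq_fintype_card, hScard]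
  have hsplit : (B.filter (· ∈ Λ)).card
      = ∑ s ∈ Sfin, (B.filter (fun x => φ x = s)).card := by
    have h1 : B.filter (· ∈ Λ) = B.filter (fun x => φ x ∈ S) := by
      apply Finset.filter_congr; intro x _; simp [hmem x]
    rw [h1]
    rw [Finset.card_eq_sum_card_fiberwise
      (f := φ) (t := Sfin) (fun x hx => by
        simp only [Finset.mem_coe, Finset.mem_filter] at hx
        simp [hSfin, hx.2])]
    apply Finset.sum_congr rfl
    intro s hs
    simp only [hSfin, Finset.mem_filter, Finset.mem_univ, true_and] at hs
    rw [Finset.filter_filter]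
    congr 1
    apply Finset.filter_congr
    intro x _
    constructor
    · rintro ⟨_, h⟩; exact h
    · intro h; exact ⟨by rw [h]; exact hs, h⟩
  have hfiber : ∀ s : Fin d → ZMod D,
      (n / D) ^ d ≤ (B.filter (fun x => φ x = s)).card ∧
      (B.filter (fun x => φ x = s)).card ≤ (n / D + 1) ^ d := by
    intro s
    have h1 : B.filter (fun x => φ x = s)
        = Fintype.piFinset (fun i =>
            (Finset.Ico (bb i) (bb i + (n:ℤ))).filter (fun z => ((z : ℤ) : ZMod D) = s i)) := by
      ext x
      simp only [Finset.mem_filter, Fintype.mem_piFinset, funext_iff, hφapp, hB]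
      constructor
      · rintro ⟨h1, h2⟩ i; exact ⟨h1 i, h2 i⟩
      · intro h; exact ⟨fun i => (h i).1, fun i => (h i).2⟩
    rw [h1, Fintype.card_piFinset]
    constructor
    · calc (n / D) ^ d = ∏ _i : Fin d, (n / D) := by
            rw [Finset.prod_const, Finset.card_univ, Fintype.card_fin]
        _ ≤ _ := Finset.prod_le_prod' fun i _ => (residue_count D hD (bb i) n (s i)).1
    · calc _ ≤ ∏ _i : Fin d, (n / D + 1) :=
            Finset.prod_le_prod' fun i _ => (residue_count D hD (bb i) n (s i)).2
        _ = (n / D + 1) ^ d := by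
            rw [Finset.prod_const, Finset.card_univ, Fintype.card_fin]
  rw [hsplit]
  constructor
  · calc D ^ (m - 1) * (n / D) ^ d = Sfin.card • (n / D) ^ d := by
          rw [hSfincard, smul_eq_mul]
      _ ≤ _ := Finset.card_nsmul_le_sum Sfin _ _ (fun s _ => (hfiber s).1)
  · calc _ ≤ Sfin.card • (n / D + 1) ^ d :=
          Finset.sum_le_card_nsmul Sfin _ _ (fun s _ => (hfiber s).2)
      _ = D ^ (m - 1) * (n / D + 1) ^ d := by rw [hSfincard, smul_eq_mul]

lemma succ_pow_le (q d : ℕ) : (q+1)^(d+1) ≤ q^(d+1) + (d+1)*(q+1)^d := by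
  induction d with
  | zero => simp
  | succ k ih =>
    calc (q+1)^(k+2) = (q+1)^(k+1) * (q+1) := by ring
      _ ≤ (q^(k+1) + (k+1)*(q+1)^k) * (q+1) := Nat.mul_le_mul_right _ ih
      _ = q^(k+1)*(q+1) + (k+1)*((q+1)^k*(q+1)) := by ring
      _ = q^(k+2) + q^(k+1) + (k+1)*(q+1)^(k+1) := by ring
      _ ≤ q^(k+2) + (q+1)^(k+1) + (k+1)*(q+1)^(k+1) := by
          have : q^(k+1) ≤ (q+1)^(k+1) := Nat.pow_le_pow_left (by omega) _
          omega
      _ = q^(k+2) + (k+2)*(q+1)^(k+1) := by ring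

lemma pow_gap (q d : ℕ) (hq : 1 ≤ q) (hd : 1 ≤ d) :
    (q+1)^d ≤ q^d + d * 2^(d-1) * q^(d-1) := by
  obtain ⟨k, rfl⟩ : ∃ k, d = k + 1 := ⟨d - 1, by omega⟩
  have h1 := succ_pow_le q k
  have h2 : (q+1)^k ≤ 2^k * q^k := by
    calc (q+1)^k ≤ (2*q)^k := Nat.pow_le_pow_left (by omega) _
      _ = 2^k * q^k := mul_pow 2 q k
  calc (q+1)^(k+1) ≤ q^(k+1) + (k+1)*(q+1)^k := h1
    _ ≤ q^(k+1) + (k+1)*(2^k * q^k) := by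
        have := Nat.mul_le_mul_left (k+1) h2
        omega
    _ = q^(k+1) + (k+1) * 2^((k+1)-1) * q^((k+1)-1) := by
        simp only [Nat.add_sub_cancel]; ring

lemma term_bound (d m D n : ℕ) (hm : 1 ≤ m) (hmd : m < d) (hD : 1 ≤ D) (hDn : D ≤ n)
    (N : ℕ) (hlo : D ^ (m-1) * (n / D) ^ d ≤ N) (hhi : N ≤ D ^ (m-1) * (n / D + 1) ^ d) :
    |(N : ℝ) / (n : ℝ) ^ d - 1 / (D : ℝ) ^ (d - m + 1)|
      ≤ ((d : ℝ) * 2 ^ (d-1)) / ((n : ℝ) * D) := by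
  set q := n / D with hqdef
  have hn1 : 1 ≤ n := le_trans hD hDn
  have hq1 : 1 ≤ q := (Nat.one_le_div_iff (by omega)).mpr hDn
  have hqDn : q * D ≤ n := Nat.div_mul_le_self n D
  have hnqD : n ≤ (q+1) * D := by
    have h1 := Nat.div_add_mod n D
    have h2 : n % D < D := Nat.mod_lt _ (by omega)
    calc n = D * q + n % D := h1.symm
      _ ≤ D * q + D := Nat.add_le_add_left h2.le _
      _ = (q+1) * D := by ring
  -- nat inequalities
  have hd1 : 1 ≤ d := by omega
  have hnat1 : D ^ (m-1) * q ^ d * D ^ (d-m+1) ≤ n ^ d := by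
    calc D ^ (m-1) * q ^ d * D ^ (d-m+1) = q ^ d * D ^ ((m-1) + (d-m+1)) := by
          rw [pow_add]; ring
      _ = (q * D) ^ d := by rw [mul_pow]; congr 2; omega
      _ ≤ n ^ d := Nat.pow_le_pow_left hqDn _
  have hnat2 : n ^ d ≤ D ^ (m-1) * (q+1) ^ d * D ^ (d-m+1) := by
    calc n ^ d ≤ ((q+1) * D) ^ d := Nat.pow_le_pow_left hnqD _
      _ = (q+1) ^ d * D ^ ((m-1) + (d-m+1)) := by rw [mul_pow]; congr 2; omega
      _ = D ^ (m-1) * (q+1) ^ d * D ^ (d-m+1) := by rw [pow_add]; ring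
  have hnat3 : D ^ (m-1) * (d * 2^(d-1) * q^(d-1)) * (n * D) ≤ d * 2^(d-1) * n ^ d := by
    have hDm : D ^ (m-1) * D = D ^ m := by
      rw [← pow_succ]; congr 1; omega
    calc D ^ (m-1) * (d * 2^(d-1) * q^(d-1)) * (n * D)
        = (d * 2^(d-1)) * ((D^(m-1) * D) * q^(d-1) * n) := by ring
      _ = (d * 2^(d-1)) * (D^m * q^(d-1) * n) := by rw [hDm]
      _ ≤ (d * 2^(d-1)) * (D^(d-1) * q^(d-1) * n) := by
          have h9 : D^m ≤ D^(d-1) := Nat.pow_le_pow_right hD (by omega)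
          gcongr
      _ = (d * 2^(d-1)) * ((D*q)^(d-1) * n) := by rw [mul_pow]
      _ ≤ (d * 2^(d-1)) * (n^(d-1) * n) := by
          have h10 : D*q ≤ n := by rw [mul_comm]; exact hqDn
          gcongr
      _ = (d * 2^(d-1)) * n ^ d := by
          rw [← pow_succ]; congr 2; omega
  -- real setup
  have hnR : (0:ℝ) < n := by exact_mod_cast hn1
  have hDR : (0:ℝ) < D := by exact_mod_cast hD
  have hndR : (0:ℝ) < (n:ℝ) ^ d := by positivity
  have hDeR : (0:ℝ) < (D:ℝ) ^ (d - m + 1) := by positivity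
  set A : ℝ := (D:ℝ)^(m-1) * (q:ℝ)^d / (n:ℝ)^d with hA
  set B : ℝ := (D:ℝ)^(m-1) * ((q:ℝ)+1)^d / (n:ℝ)^d with hB
  have hNlo : A ≤ (N:ℝ) / (n:ℝ)^d := by
    rw [hA, div_le_div_iff₀ hndR hndR]
    have : ((D ^ (m-1) * q ^ d : ℕ) : ℝ) ≤ (N:ℝ) := by exact_mod_cast hlo
    push_cast at this
    nlinarith [hndR]
  have hNhi : (N:ℝ) / (n:ℝ)^d ≤ B := by
    rw [hB, div_le_div_iff₀ hndR hndR]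
    have : ((N:ℕ) : ℝ) ≤ ((D ^ (m-1) * (q+1) ^ d : ℕ) : ℝ) := by exact_mod_cast hhi
    push_cast at this
    nlinarith [hndR]
  have htlo : A ≤ 1 / (D:ℝ)^(d-m+1) := by
    rw [hA, div_le_div_iff₀ hndR hDeR]
    have : ((D ^ (m-1) * q ^ d * D ^ (d-m+1) : ℕ) : ℝ) ≤ ((n ^ d : ℕ) : ℝ) := by
      exact_mod_cast hnat1
    push_cast at this
    linarith
  have hthi : 1 / (D:ℝ)^(d-m+1) ≤ B := by
    rw [hB, div_le_div_iff₀ hDeR hndR]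
    have : ((n ^ d : ℕ) : ℝ) ≤ ((D ^ (m-1) * (q+1) ^ d * D ^ (d-m+1) : ℕ) : ℝ) := by
      exact_mod_cast hnat2
    push_cast at this
    linarith
  have habs : |(N : ℝ) / (n : ℝ) ^ d - 1 / (D : ℝ) ^ (d - m + 1)| ≤ B - A :=
    abs_le.mpr ⟨by linarith, by linarith⟩
  have hgapR : ((q:ℝ)+1)^d - (q:ℝ)^d ≤ (d:ℝ) * 2^(d-1) * (q:ℝ)^(d-1) := by
    have := pow_gap q d hq1 hd1
    have h2 : (((q+1)^d : ℕ) : ℝ) ≤ ((q^d + d * 2^(d-1) * q^(d-1) : ℕ) : ℝ) := by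
      exact_mod_cast this
    push_cast at h2
    linarith
  have hfinal : B - A ≤ ((d : ℝ) * 2 ^ (d-1)) / ((n : ℝ) * D) := by
    have h7 : B - A = (D:ℝ)^(m-1) * (((q:ℝ)+1)^d - (q:ℝ)^d) / (n:ℝ)^d := by
      rw [hA, hB]; ring
    rw [h7]
    have h8 : (D:ℝ)^(m-1) * (((q:ℝ)+1)^d - (q:ℝ)^d) / (n:ℝ)^d
        ≤ (D:ℝ)^(m-1) * ((d:ℝ) * 2^(d-1) * (q:ℝ)^(d-1)) / (n:ℝ)^d := by
      gcongr
    refine le_trans h8 ?_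
    rw [div_le_div_iff₀ hndR (by positivity)]
    have : ((D ^ (m-1) * (d * 2^(d-1) * q^(d-1)) * (n * D) : ℕ) : ℝ)
        ≤ ((d * 2^(d-1) * n ^ d : ℕ) : ℝ) := by exact_mod_cast hnat3
    push_cast at this
    nlinarith [this]
  linarith

/-- For `d > m ≥ 1`, lattices `Λ_D ⊆ ℤ^d` of index `D^{d-m+1}` containing `D·ℤ^d`,
and integer boxes `B_n` of side `n`, the sum `∑_{D=1}^n |p_{nD} - D^{-(d-m+1)}|`
tends to `0`, where `p_{nD} = |Λ_D ∩ B_n| / n^d`. -/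
theorem sum_small_D_error_tendsto_zero (d m : ℕ) (hm : 1 ≤ m) (hmd : m < d)
    (Λ : ℕ → AddSubgroup (Fin d → ℤ))
    (hindex : ∀ D : ℕ, 1 ≤ D → (Λ D).index = D ^ (d - m + 1))
    (hsub : ∀ D : ℕ, ∀ x : Fin d → ℤ, (∀ i, (D : ℤ) ∣ x i) → x ∈ Λ D)
    (b : ℕ → Fin d → ℤ) :
    Filter.Tendsto
      (fun n : ℕ =>
        ∑ D ∈ Finset.Icc 1 n,
          |({x : Fin d → ℤ | x ∈ Λ D ∧ ∀ i, b n i ≤ x i ∧ x i < b n i + n}.ncard : ℝ) /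
              (n : ℝ) ^ d -
            1 / (D : ℝ) ^ (d - m + 1)|)
      Filter.atTop (nhds 0) := by
  classical
  set C : ℝ := (d : ℝ) * 2 ^ (d - 1) with hC
  have hCpos : 0 ≤ C := by positivity
  -- the comparison function
  have t1 : Filter.Tendsto (fun n : ℕ => Real.log n / n) Filter.atTop (nhds 0) := by
    have h := Real.tendsto_pow_log_div_mul_add_atTop 1 0 1 one_ne_zero
    simp only [pow_one, one_mul, add_zero] at h
    exact h.comp tendsto_natCast_atTop_atTop
  have t2 : Filter.Tendsto (fun n : ℕ => 1 / (n : ℝ)) Filter.atTop (nhds 0) :=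
    tendsto_one_div_atTop_nhds_zero_nat
  have t3 : Filter.Tendsto (fun n : ℕ => C * (1 + Real.log n) / n) Filter.atTop (nhds 0) := by
    have h := (t2.add t1).const_mul C
    rw [add_zero, mul_zero] at h
    exact Filter.Tendsto.congr (fun n => by ring) h
  apply squeeze_zero'
  · exact Filter.Eventually.of_forall fun n =>
      Finset.sum_nonneg fun D _ => abs_nonneg _
  · refine Filter.eventually_atTop.mpr ⟨1, fun n hn => ?_⟩
    have hnR : (0 : ℝ) < n := by exact_mod_cast hn
    have hterm : ∀ D : ℕ, 1 ≤ D → D ≤ n →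
        |({x : Fin d → ℤ | x ∈ Λ D ∧ ∀ i, b n i ≤ x i ∧ x i < b n i + n}.ncard : ℝ) /
            (n : ℝ) ^ d - 1 / (D : ℝ) ^ (d - m + 1)| ≤ C / ((n : ℝ) * D) := by
      intro D h1 h2
      set F := (Fintype.piFinset (fun i => Finset.Ico (b n i) (b n i + (n : ℤ)))).filter
        (· ∈ Λ D) with hF
      have hset : {x : Fin d → ℤ | x ∈ Λ D ∧ ∀ i, b n i ≤ x i ∧ x i < b n i + n}
          = (↑F : Set (Fin d → ℤ)) := by
        ext x
        simp only [Set.mem_setOf_eq, hF, Finset.coe_filter, Fintype.mem_piFinset,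
          Finset.mem_Ico]
        tauto
      rw [hset, Set.ncard_coe_finset]
      obtain ⟨hlo, hhi⟩ := box_count d m D n hm hmd h1 (Λ D) (hindex D h1) (hsub D) (b n)
      exact term_bound d m D n hm hmd h1 h2 F.card hlo hhi
    calc ∑ D ∈ Finset.Icc 1 n,
          |({x : Fin d → ℤ | x ∈ Λ D ∧ ∀ i, b n i ≤ x i ∧ x i < b n i + n}.ncard : ℝ) /
              (n : ℝ) ^ d - 1 / (D : ℝ) ^ (d - m + 1)|
        ≤ ∑ D ∈ Finset.Icc 1 n, C / ((n : ℝ) * D) := by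
          apply Finset.sum_le_sum
          intro D hD
          rw [Finset.mem_Icc] at hD
          exact hterm D hD.1 hD.2
      _ = C / n * ∑ D ∈ Finset.Icc 1 n, ((D : ℝ))⁻¹ := by
          rw [Finset.mul_sum]
          apply Finset.sum_congr rfl
          intro D _
          rw [div_mul_eq_div_div, div_eq_mul_inv]
      _ ≤ C / n * (1 + Real.log n) := by
          have hsum : ∑ D ∈ Finset.Icc 1 n, ((D : ℝ))⁻¹ = ((harmonic n : ℚ) : ℝ) := by
            rw [harmonic_eq_sum_Icc]; push_cast; rfl
          rw [hsum]
          exact mul_le_mul_of_nonneg_left (harmonic_le_one_add_log n) (by positivity)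
      _ = C * (1 + Real.log n) / n := by ring
  · exact t3
end
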